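/- arXiv:2110.13508 — 9 statements merged into one kernel-verified Lean document; each statement's English description precedes it below -/
import Mathlib

section
/- Let δ ∈ ℝ and define k : (0, π) → ℝ by k(θ) = cos θ + δ·( (1/2)·cos θ·log( (1 + cos θ)/(1 − cos θ) ) − 1 ). Then for all θ ∈ (0, π): (i) k''(θ) = −k(θ) + δ/sin²θ; (ii) cot θ · k'(θ) = −k(θ) − δ/sin²θ; and consequently (iii) ( k''(θ) )² + ( cot θ · k'(θ) )² − 2·( k(θ) )² = 2δ²/sin⁴θ, which is nonzero for every θ ∈ (0, π) whenever δ ≠ 0. -/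
/-!
In the variable `x = cos θ`, `k` is `P₁(x) + δ Q₁(x)` with `Q₁(x) = (x/2) log((1+x)/(1-x)) - 1` the
Legendre function of the second kind. Since `θ ↦ log((1 + cos θ)/(1 - cos θ))` has derivative
`-2 / sin θ`, both derivatives of `k` are explicit, and `sin² + cos² = 1` reduces (i) and (ii) to
algebra. Then (iii) follows from (i) and (ii) alone: the cross terms `∓2kδ/sin²θ` cancel.
-/

open Real

noncomputable def kernelMode (δ θ : ℝ) : ℝ :=
  cos θ + δ * ((1 / 2) * cos θ * log ((1 + cos θ) / (1 - cos θ)) - 1)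

noncomputable def kernelModeDeriv (δ θ : ℝ) : ℝ :=
  -sin θ + δ * (-(1 / 2) * sin θ * log ((1 + cos θ) / (1 - cos θ)) - cos θ / sin θ)

lemma one_add_cos_mul_one_sub_cos (x : ℝ) : (1 + cos x) * (1 - cos x) = sin x ^ 2 := by
  linear_combination -sin_sq_add_cos_sq x

lemma hasDerivAt_log_one_add_cos_div_one_sub_cos {x : ℝ} (hx : sin x ≠ 0) :
    HasDerivAt (fun y => log ((1 + cos y) / (1 - cos y))) (-2 / sin x) x := by
  have hprod : (1 + cos x) * (1 - cos x) ≠ 0 := by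
    rw [one_add_cos_mul_one_sub_cos]; positivity
  obtain ⟨hplus, hminus⟩ := mul_ne_zero_iff.mp hprod
  have hquot := ((hasDerivAt_cos x).const_add 1).div ((hasDerivAt_cos x).const_sub 1) hminus
  refine (hquot.log (div_ne_zero hplus hminus)).congr_deriv ?_
  simp only [Pi.div_apply]
  field_simp
  linear_combination 2 * one_add_cos_mul_one_sub_cos x

lemma hasDerivAt_kernelMode (δ : ℝ) {x : ℝ} (hx : sin x ≠ 0) :
    HasDerivAt (kernelMode δ) (kernelModeDeriv δ x) x := by
  have hlog := hasDerivAt_log_one_add_cos_div_one_sub_cos hx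
  have h := (hasDerivAt_cos x).add
    ((((hasDerivAt_cos x).const_mul (1 / 2 : ℝ)).mul hlog).sub_const 1 |>.const_mul δ)
  refine h.congr_deriv ?_
  rw [kernelModeDeriv]
  field_simp
  ring

lemma hasDerivAt_kernelModeDeriv (δ : ℝ) {x : ℝ} (hx : sin x ≠ 0) :
    HasDerivAt (kernelModeDeriv δ) (-kernelMode δ x + δ / sin x ^ 2) x := by
  have hlog := hasDerivAt_log_one_add_cos_div_one_sub_cos hx
  have h := (hasDerivAt_sin x).neg.add
    (((((hasDerivAt_sin x).const_mul (-(1 / 2) : ℝ)).mul hlog).sub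
      ((hasDerivAt_cos x).div (hasDerivAt_sin x) hx)).const_mul δ)
  refine h.congr_deriv ?_
  rw [kernelMode]
  field_simp
  linear_combination 2 * δ * sin_sq_add_cos_sq x

lemma cot_mul_kernelModeDeriv (δ : ℝ) {x : ℝ} (hx : sin x ≠ 0) :
    cos x / sin x * kernelModeDeriv δ x = -kernelMode δ x - δ / sin x ^ 2 := by
  rw [kernelModeDeriv, kernelMode]
  field_simp
  linear_combination (-2 * δ) * sin_sq_add_cos_sq x

/-- For the `m = 0` kernel mode `k(θ) = cos θ + δ·((1/2)·cos θ·log((1+cos θ)/(1−cos θ)) − 1)`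
of `Δ̂ + 2` on the sphere, on `(0, π)` one has `k'' = −k + δ/sin²θ`,
`cot θ · k' = −k − δ/sin²θ`, hence
`(k'')² + (cot θ · k')² − 2k² = 2δ²/sin⁴θ`, which is nonzero whenever `δ ≠ 0`. -/
theorem stmt_5 (δ : ℝ) (k : ℝ → ℝ)
    (hk : ∀ θ ∈ Set.Ioo (0 : ℝ) Real.pi,
      k θ = Real.cos θ
        + δ * ((1 / 2) * Real.cos θ
            * Real.log ((1 + Real.cos θ) / (1 - Real.cos θ)) - 1)) :
    ∀ θ ∈ Set.Ioo (0 : ℝ) Real.pi,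
      deriv (deriv k) θ = -k θ + δ / Real.sin θ ^ 2 ∧
      (Real.cos θ / Real.sin θ) * deriv k θ = -k θ - δ / Real.sin θ ^ 2 ∧
      (deriv (deriv k) θ) ^ 2 + ((Real.cos θ / Real.sin θ) * deriv k θ) ^ 2
          - 2 * (k θ) ^ 2 = 2 * δ ^ 2 / Real.sin θ ^ 4 ∧
      (δ ≠ 0 →
        (deriv (deriv k) θ) ^ 2 + ((Real.cos θ / Real.sin θ) * deriv k θ) ^ 2
          - 2 * (k θ) ^ 2 ≠ 0) := by
  have hsin : ∀ x ∈ Set.Ioo 0 π, sin x ≠ 0 := fun x hx => (sin_pos_of_pos_of_lt_pi hx.1 hx.2).ne'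
  have hderiv : ∀ x ∈ Set.Ioo 0 π, deriv k x = kernelModeDeriv δ x := fun x hx =>
    ((hasDerivAt_kernelMode δ (hsin x hx)).congr_of_eventuallyEq
      (Filter.eventuallyEq_of_mem (isOpen_Ioo.mem_nhds hx) hk)).deriv
  intro θ hθ
  have hsθ := hsin θ hθ
  have hderiv2 : deriv (deriv k) θ = -k θ + δ / sin θ ^ 2 := by
    rw [hk θ hθ]
    exact ((hasDerivAt_kernelModeDeriv δ hsθ).congr_of_eventuallyEq
      (Filter.eventuallyEq_of_mem (isOpen_Ioo.mem_nhds hθ) hderiv)).deriv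
  have hcot : cos θ / sin θ * deriv k θ = -k θ - δ / sin θ ^ 2 := by
    rw [hderiv θ hθ, hk θ hθ]
    exact cot_mul_kernelModeDeriv δ hsθ
  have hsum : deriv (deriv k) θ ^ 2 + (cos θ / sin θ * deriv k θ) ^ 2 - 2 * k θ ^ 2
      = 2 * δ ^ 2 / sin θ ^ 4 := by
    rw [hderiv2, hcot]
    field_simp
    ring
  refine ⟨hderiv2, hcot, hsum, fun hδ => ?_⟩
  rw [hsum]
  positivity
end

section
/- Let U ⊆ ℝ² be open with coordinates (t, r) and r > 0 on U, and let h₁t, h₁r, h₂, ζ_t, ζ_r, ζ_e : U → ℝ be continuously differentiable. Define the gauge-transformed fields h₁t^Y = h₁t + ζ_t/r + ∂_t ζ_e, h₁r^Y = h₁r + ζ_r/r + ∂_r ζ_e − ζ_e/r, h₂^Y = h₂ + (2/r) ζ_e. Then the variables Y_t := r·h₁t − (r²/2) ∂_t h₂ and Y_r := r·h₁r − (r²/2) ∂_r h₂ transform as Y_t^Y = Y_t + ζ_t and Y_r^Y = Y_r + ζ_r, where Y_A^Y is built from the transformed fields by the same formula. -/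
/-- Partial derivative with respect to the first coordinate `t`. -/
noncomputable def pdt (g : ℝ → ℝ → ℝ) : ℝ → ℝ → ℝ := fun t r => deriv (fun s => g s r) t

/-- Partial derivative with respect to the second coordinate `r`. -/
noncomputable def pdr (g : ℝ → ℝ → ℝ) : ℝ → ℝ → ℝ := fun t r => deriv (fun s => g t s) r

/-! The gauge terms cancel identically once the partial derivatives of `h₂ + (2/r) ζ_e` are
expanded by the sum and product rules; `∂_r (2/r) = -2/r²` is what absorbs the `-ζ_e/r`
in `h₁r`. -/

section Slices

variable {𝕜 E F G : Type*} [NontriviallyNormedField 𝕜]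
  [NormedAddCommGroup E] [NormedSpace 𝕜 E] [NormedAddCommGroup F] [NormedSpace 𝕜 F]
  [NormedAddCommGroup G] [NormedSpace 𝕜 G]
  {U : Set (E × F)} {f : E → F → G} {x : E} {y : F}

theorem ContDiffOn.differentiableAt_slice_fst (hU : IsOpen U)
    (hf : ContDiffOn 𝕜 1 (fun p : E × F => f p.1 p.2) U) (hp : (x, y) ∈ U) :
    DifferentiableAt 𝕜 (fun s => f s y) x :=
  ((hf.differentiableOn one_ne_zero).differentiableAt (hU.mem_nhds hp)).comp
    (f := fun s => (s, y)) x (hasFDerivAt_prodMk_left x y).differentiableAt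

theorem ContDiffOn.differentiableAt_slice_snd (hU : IsOpen U)
    (hf : ContDiffOn 𝕜 1 (fun p : E × F => f p.1 p.2) U) (hp : (x, y) ∈ U) :
    DifferentiableAt 𝕜 (fun s => f x s) y :=
  ((hf.differentiableOn one_ne_zero).differentiableAt (hU.mem_nhds hp)).comp
    (f := fun s => (x, s)) y (hasFDerivAt_prodMk_right x y).differentiableAt

end Slices

section PartialDerivatives

variable {f g : ℝ → ℝ → ℝ} {c : ℝ → ℝ} {t r : ℝ}

theorem pdt_add_mul_left (hf : DifferentiableAt ℝ (fun s => f s r) t)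
    (hg : DifferentiableAt ℝ (fun s => g s r) t) :
    pdt (fun t r => f t r + c r * g t r) t r = pdt f t r + c r * pdt g t r := by
  simp only [pdt]
  rw [deriv_fun_add hf (hg.const_mul _), deriv_const_mul _ hg]

theorem pdr_add_mul_left (hf : DifferentiableAt ℝ (fun s => f t s) r)
    (hc : DifferentiableAt ℝ c r) (hg : DifferentiableAt ℝ (fun s => g t s) r) :
    pdr (fun t r => f t r + c r * g t r) t r
      = pdr f t r + (deriv c r * g t r + c r * pdr g t r) := by
  simp only [pdr]
  rw [deriv_fun_add hf (hc.fun_mul hg), deriv_fun_mul hc hg]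

end PartialDerivatives

theorem stmt_7_general (U : Set (ℝ × ℝ)) (hU : IsOpen U) (hrpos : ∀ p ∈ U, 0 < p.2)
    (h1t h1r h2 ζt ζr ζe : ℝ → ℝ → ℝ)
    (hh2 : ContDiffOn ℝ 1 (fun p : ℝ × ℝ => h2 p.1 p.2) U)
    (hζe : ContDiffOn ℝ 1 (fun p : ℝ × ℝ => ζe p.1 p.2) U)
    (h1tY h1rY h2Y : ℝ → ℝ → ℝ)
    (hh1tY : ∀ t r, h1tY t r = h1t t r + ζt t r / r + pdt ζe t r)
    (hh1rY : ∀ t r, h1rY t r = h1r t r + ζr t r / r + pdr ζe t r - ζe t r / r)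
    (hh2Y : ∀ t r, h2Y t r = h2 t r + 2 / r * ζe t r) :
    ∀ t r, (t, r) ∈ U →
      (r * h1tY t r - r ^ 2 / 2 * pdt h2Y t r
          = (r * h1t t r - r ^ 2 / 2 * pdt h2 t r) + ζt t r ∧
       r * h1rY t r - r ^ 2 / 2 * pdr h2Y t r
          = (r * h1r t r - r ^ 2 / 2 * pdr h2 t r) + ζr t r) := by
  intro t r hp
  have hr : r ≠ 0 := (hrpos (t, r) hp).ne'
  have hpdt := pdt_add_mul_left (c := fun r => 2 / r)
    (hh2.differentiableAt_slice_fst hU hp) (hζe.differentiableAt_slice_fst hU hp)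
  have hpdr := pdr_add_mul_left (c := fun r => 2 / r) (hh2.differentiableAt_slice_snd hU hp)
    ((differentiableAt_const 2).div differentiableAt_id hr)
    (hζe.differentiableAt_slice_snd hU hp)
  rw [deriv_const_div_id] at hpdr
  rw [show h2Y = _ from funext₂ hh2Y, hh1tY, hh1rY, hpdt, hpdr]
  constructor <;> field_simp <;> ring

/-- Transformation rule of the even-parity gauge-variant part
`Y_A := r h₁A − (r²/2) ∂_A h₂`: under the second-kind gauge transformation
`h₁t ↦ h₁t + ζ_t/r + ∂_t ζ_e`, `h₁r ↦ h₁r + ζ_r/r + ∂_r ζ_e − ζ_e/r`,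
`h₂ ↦ h₂ + (2/r) ζ_e`, one has `Y_t ↦ Y_t + ζ_t` and `Y_r ↦ Y_r + ζ_r` on `U`. -/
theorem stmt_7 (U : Set (ℝ × ℝ)) (hU : IsOpen U) (hrpos : ∀ p ∈ U, 0 < p.2)
    (h1t h1r h2 ζt ζr ζe : ℝ → ℝ → ℝ)
    (hh1t : ContDiffOn ℝ 1 (fun p : ℝ × ℝ => h1t p.1 p.2) U)
    (hh1r : ContDiffOn ℝ 1 (fun p : ℝ × ℝ => h1r p.1 p.2) U)
    (hh2 : ContDiffOn ℝ 1 (fun p : ℝ × ℝ => h2 p.1 p.2) U)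
    (hζt : ContDiffOn ℝ 1 (fun p : ℝ × ℝ => ζt p.1 p.2) U)
    (hζr : ContDiffOn ℝ 1 (fun p : ℝ × ℝ => ζr p.1 p.2) U)
    (hζe : ContDiffOn ℝ 1 (fun p : ℝ × ℝ => ζe p.1 p.2) U)
    (h1tY h1rY h2Y : ℝ → ℝ → ℝ)
    (hh1tY : ∀ t r, h1tY t r = h1t t r + ζt t r / r + pdt ζe t r)
    (hh1rY : ∀ t r, h1rY t r = h1r t r + ζr t r / r + pdr ζe t r - ζe t r / r)
    (hh2Y : ∀ t r, h2Y t r = h2 t r + 2 / r * ζe t r) :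
    ∀ t r, (t, r) ∈ U →
      (r * h1tY t r - r ^ 2 / 2 * pdt h2Y t r
          = (r * h1t t r - r ^ 2 / 2 * pdt h2 t r) + ζt t r ∧
       r * h1rY t r - r ^ 2 / 2 * pdr h2Y t r
          = (r * h1r t r - r ^ 2 / 2 * pdr h2 t r) + ζr t r) :=
  stmt_7_general U hU hrpos h1t h1r h2 ζt ζr ζe hh2 hζe h1tY h1rY h2Y hh1tY hh1rY hh2Y
end

section
/- Let U ⊆ ℝ² be open with coordinates (t, r) and r > 0 on U, let f : (0, ∞) → ℝ, let l be a natural number, and let h₀, h₁t, h₁r, h₂, ζ_t, ζ_r, ζ_e : U → ℝ be continuously differentiable. Define the gauge-transformed fields h₁t^Y = h₁t + ζ_t/r + ∂_t ζ_e, h₁r^Y = h₁r + ζ_r/r + ∂_r ζ_e − ζ_e/r, h₂^Y = h₂ + (2/r) ζ_e, and h₀^Y = h₀ + (4/r)·( −(l(l+1)/2) ζ_e + f(r) ζ_r ). With Y_r := r·h₁r − (r²/2) ∂_r h₂, the combination F := h₀ − (4/r) f(r) Y_r + l(l+1) h₂ is gauge invariant: the same combination built from the transformed fields equals F on U. -/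
/-! Shifting `h₂` by `(2/r) ζ_e` changes `∂_r h₂` by `-(2/r²) ζ_e + (2/r) ∂_r ζ_e`, so `Y_r` changes by
exactly `ζ_r`; its contribution `-(4/r) f ζ_r` to `F` cancels the `ζ_r`-shift of `h₀`, and the
`l(l+1) ζ_e` shifts of `h₀` and of `l(l+1) h₂` cancel each other. -/

theorem DifferentiableOn.differentiableAt_right_slice {U : Set (ℝ × ℝ)} (hU : IsOpen U)
    {g : ℝ → ℝ → ℝ} (hg : DifferentiableOn ℝ (fun p : ℝ × ℝ => g p.1 p.2) U) {t r : ℝ}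
    (hmem : (t, r) ∈ U) : DifferentiableAt ℝ (fun s => g t s) r :=
  (hg.differentiableAt (hU.mem_nhds hmem)).comp (f := fun s : ℝ => ((t, s) : ℝ × ℝ)) r
    ((differentiableAt_const t).prodMk differentiableAt_id)

theorem pdr_add_div_mul {g e : ℝ → ℝ → ℝ} {t r : ℝ} (c : ℝ) (hr : r ≠ 0)
    (hg : DifferentiableAt ℝ (fun s => g t s) r) (he : DifferentiableAt ℝ (fun s => e t s) r) :
    pdr (fun t s => g t s + c / s * e t s) t r
      = pdr g t r + (-(c / r ^ 2) * e t r + c / r * pdr e t r) := by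
  have hc : HasDerivAt (fun s : ℝ => c / s) (-(c / r ^ 2)) r := by
    simpa [div_eq_mul_inv, neg_div] using (hasDerivAt_inv hr).const_mul c
  exact (hg.hasDerivAt.add (hc.mul he.hasDerivAt)).deriv

theorem stmt_8_general (U : Set (ℝ × ℝ)) (hU : IsOpen U) (hrpos : ∀ p ∈ U, 0 < p.2)
    (f : ℝ → ℝ) (l : ℕ)
    (h0 h1r h2 ζr ζe : ℝ → ℝ → ℝ)
    (hh2 : ContDiffOn ℝ 1 (fun p : ℝ × ℝ => h2 p.1 p.2) U)
    (hζe : ContDiffOn ℝ 1 (fun p : ℝ × ℝ => ζe p.1 p.2) U)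
    (h0Y h1rY h2Y : ℝ → ℝ → ℝ)
    (hh1rY : ∀ t r, h1rY t r = h1r t r + ζr t r / r + pdr ζe t r - ζe t r / r)
    (hh2Y : ∀ t r, h2Y t r = h2 t r + 2 / r * ζe t r)
    (hh0Y : ∀ t r, h0Y t r = h0 t r
        + 4 / r * (-((l : ℝ) * ((l : ℝ) + 1) / 2) * ζe t r + f r * ζr t r)) :
    ∀ t r, (t, r) ∈ U →
      h0Y t r - 4 / r * f r * (r * h1rY t r - r ^ 2 / 2 * pdr h2Y t r)
          + (l : ℝ) * ((l : ℝ) + 1) * h2Y t r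
        = h0 t r - 4 / r * f r * (r * h1r t r - r ^ 2 / 2 * pdr h2 t r)
          + (l : ℝ) * ((l : ℝ) + 1) * h2 t r := by
  intro t r hmem
  have hr : r ≠ 0 := (hrpos (t, r) hmem).ne'
  obtain rfl : h2Y = fun t s => h2 t s + 2 / s * ζe t s := funext₂ hh2Y
  rw [pdr_add_div_mul 2 hr
    ((hh2.differentiableOn one_ne_zero).differentiableAt_right_slice hU hmem)
    ((hζe.differentiableOn one_ne_zero).differentiableAt_right_slice hU hmem), hh0Y, hh1rY]
  field_simp
  ring

/-- Gauge invariance of the even-parity scalar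
`F := h₀ − (4/r) f(r) Y_r + l(l+1) h₂` with `Y_r := r h₁r − (r²/2) ∂_r h₂`:
under the second-kind gauge transformation
`h₁t ↦ h₁t + ζ_t/r + ∂_t ζ_e`, `h₁r ↦ h₁r + ζ_r/r + ∂_r ζ_e − ζ_e/r`,
`h₂ ↦ h₂ + (2/r) ζ_e`, `h₀ ↦ h₀ + (4/r)(−(l(l+1)/2) ζ_e + f(r) ζ_r)`,
the combination `F` is unchanged on `U`. -/
theorem stmt_8 (U : Set (ℝ × ℝ)) (hU : IsOpen U) (hrpos : ∀ p ∈ U, 0 < p.2)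
    (f : ℝ → ℝ) (l : ℕ)
    (h0 h1t h1r h2 ζt ζr ζe : ℝ → ℝ → ℝ)
    (hh0 : ContDiffOn ℝ 1 (fun p : ℝ × ℝ => h0 p.1 p.2) U)
    (hh1t : ContDiffOn ℝ 1 (fun p : ℝ × ℝ => h1t p.1 p.2) U)
    (hh1r : ContDiffOn ℝ 1 (fun p : ℝ × ℝ => h1r p.1 p.2) U)
    (hh2 : ContDiffOn ℝ 1 (fun p : ℝ × ℝ => h2 p.1 p.2) U)
    (hζt : ContDiffOn ℝ 1 (fun p : ℝ × ℝ => ζt p.1 p.2) U)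
    (hζr : ContDiffOn ℝ 1 (fun p : ℝ × ℝ => ζr p.1 p.2) U)
    (hζe : ContDiffOn ℝ 1 (fun p : ℝ × ℝ => ζe p.1 p.2) U)
    (h0Y h1tY h1rY h2Y : ℝ → ℝ → ℝ)
    (hh1tY : ∀ t r, h1tY t r = h1t t r + ζt t r / r + pdt ζe t r)
    (hh1rY : ∀ t r, h1rY t r = h1r t r + ζr t r / r + pdr ζe t r - ζe t r / r)
    (hh2Y : ∀ t r, h2Y t r = h2 t r + 2 / r * ζe t r)
    (hh0Y : ∀ t r, h0Y t r = h0 t r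
        + 4 / r * (-((l : ℝ) * ((l : ℝ) + 1) / 2) * ζe t r + f r * ζr t r)) :
    ∀ t r, (t, r) ∈ U →
      h0Y t r - 4 / r * f r * (r * h1rY t r - r ^ 2 / 2 * pdr h2Y t r)
          + (l : ℝ) * ((l : ℝ) + 1) * h2Y t r
        = h0 t r - 4 / r * f r * (r * h1r t r - r ^ 2 / 2 * pdr h2 t r)
          + (l : ℝ) * ((l : ℝ) + 1) * h2 t r :=
  stmt_8_general U hU hrpos f l h0 h1r h2 ζr ζe hh2 hζe h0Y h1rY h2Y hh1rY hh2Y hh0Y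
end

section
/- Let U ⊆ ℝ² be open with coordinates (t, r) and r > 0 on U, let f : (0, ∞) → ℝ be differentiable with f(r) ≠ 0 on U, and let h_tt, h_tr, h_rr, h₁t, h₁r, h₂, ζ_t, ζ_r, ζ_e : U → ℝ be continuously differentiable. Define the gauge-transformed fields h_tt^Y = h_tt + 2 ∂_t ζ_t − f f' ζ_r, h_tr^Y = h_tr + ∂_t ζ_r + ∂_r ζ_t − (f'/f) ζ_t, h_rr^Y = h_rr + 2 ∂_r ζ_r + (f'/f) ζ_r, together with h₁t^Y = h₁t + ζ_t/r + ∂_t ζ_e, h₁r^Y = h₁r + ζ_r/r + ∂_r ζ_e − ζ_e/r, h₂^Y = h₂ + (2/r) ζ_e. With Y_t := r·h₁t − (r²/2) ∂_t h₂ and Y_r := r·h₁r − (r²/2) ∂_r h₂ (assumed continuously differentiable), the combinations F_tt := h_tt − 2 ∂_t Y_t + f f' Y_r, F_tr := h_tr − ∂_t Y_r − ∂_r Y_t + (f'/f) Y_t, F_rr := h_rr − 2 ∂_r Y_r − (f'/f) Y_r are gauge invariant: the same combinations built from the transformed fields equal F_tt, F_tr, F_rr on U. -/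
open Filter Topology

section PartialDerivatives

variable {g k l : ℝ → ℝ → ℝ} {t r : ℝ}

lemma DifferentiableAt.differentiableAt_slice_t
    (hg : DifferentiableAt ℝ (fun p : ℝ × ℝ => g p.1 p.2) (t, r)) :
    DifferentiableAt ℝ (fun s => g s r) t :=
  hg.comp (f := fun s : ℝ => (s, r)) t (differentiableAt_id.prodMk (differentiableAt_const r))

lemma DifferentiableAt.differentiableAt_slice_r
    (hg : DifferentiableAt ℝ (fun p : ℝ × ℝ => g p.1 p.2) (t, r)) :
    DifferentiableAt ℝ (fun s => g t s) r :=
  hg.comp (f := fun s : ℝ => (t, s)) r ((differentiableAt_const t).prodMk differentiableAt_id)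

lemma pdt_eq_add_of_eqOn {U : Set (ℝ × ℝ)} (hU : IsOpen U)
    (hgkl : ∀ p ∈ U, g p.1 p.2 = k p.1 p.2 + l p.1 p.2)
    (hk : DifferentiableAt ℝ (fun p : ℝ × ℝ => k p.1 p.2) (t, r))
    (hl : DifferentiableAt ℝ (fun p : ℝ × ℝ => l p.1 p.2) (t, r)) (hp : (t, r) ∈ U) :
    pdt g t r = pdt k t r + pdt l t r := by
  have hnear : ∀ᶠ s in 𝓝 t, (s, r) ∈ U :=
    (continuous_id.prodMk continuous_const).continuousAt.preimage_mem_nhds (hU.mem_nhds hp)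
  have hslice : (fun s => g s r) =ᶠ[𝓝 t] fun s => k s r + l s r :=
    hnear.mono fun s hs => hgkl (s, r) hs
  exact hslice.deriv_eq.trans <|
    deriv_fun_add hk.differentiableAt_slice_t hl.differentiableAt_slice_t

lemma pdr_eq_add_of_eqOn {U : Set (ℝ × ℝ)} (hU : IsOpen U)
    (hgkl : ∀ p ∈ U, g p.1 p.2 = k p.1 p.2 + l p.1 p.2)
    (hk : DifferentiableAt ℝ (fun p : ℝ × ℝ => k p.1 p.2) (t, r))
    (hl : DifferentiableAt ℝ (fun p : ℝ × ℝ => l p.1 p.2) (t, r)) (hp : (t, r) ∈ U) :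
    pdr g t r = pdr k t r + pdr l t r := by
  have hnear : ∀ᶠ s in 𝓝 r, (t, s) ∈ U :=
    (continuous_const.prodMk continuous_id).continuousAt.preimage_mem_nhds (hU.mem_nhds hp)
  have hslice : (fun s => g t s) =ᶠ[𝓝 r] fun s => k t s + l t s :=
    hnear.mono fun s hs => hgkl (t, s) hs
  exact hslice.deriv_eq.trans <|
    deriv_fun_add hk.differentiableAt_slice_r hl.differentiableAt_slice_r

end PartialDerivatives

section GaugeVector

variable {h1 h1Y h2 h2Y ζ ζe : ℝ → ℝ → ℝ} {t r : ℝ}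

lemma gaugeVector_t_shift (hr : r ≠ 0)
    (hh2 : DifferentiableAt ℝ (fun p : ℝ × ℝ => h2 p.1 p.2) (t, r))
    (hζe : DifferentiableAt ℝ (fun p : ℝ × ℝ => ζe p.1 p.2) (t, r))
    (hh1Y : h1Y t r = h1 t r + ζ t r / r + pdt ζe t r)
    (hh2Y : ∀ s, h2Y s r = h2 s r + 2 / r * ζe s r) :
    r * h1Y t r - r ^ 2 / 2 * pdt h2Y t r
      = r * h1 t r - r ^ 2 / 2 * pdt h2 t r + ζ t r := by
  have hpdt : pdt h2Y t r = pdt h2 t r + 2 / r * pdt ζe t r := by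
    have hderiv : HasDerivAt (fun s => h2Y s r) (pdt h2 t r + 2 / r * pdt ζe t r) t := by
      rw [show (fun s => h2Y s r) = _ from funext hh2Y]
      exact hh2.differentiableAt_slice_t.hasDerivAt.add
        (hζe.differentiableAt_slice_t.hasDerivAt.const_mul (2 / r))
    exact hderiv.deriv
  rw [hh1Y, hpdt]
  field_simp
  ring

lemma gaugeVector_r_shift (hr : r ≠ 0)
    (hh2 : DifferentiableAt ℝ (fun p : ℝ × ℝ => h2 p.1 p.2) (t, r))
    (hζe : DifferentiableAt ℝ (fun p : ℝ × ℝ => ζe p.1 p.2) (t, r))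
    (hh1Y : h1Y t r = h1 t r + ζ t r / r + pdr ζe t r - ζe t r / r)
    (hh2Y : ∀ s, h2Y t s = h2 t s + 2 / s * ζe t s) :
    r * h1Y t r - r ^ 2 / 2 * pdr h2Y t r
      = r * h1 t r - r ^ 2 / 2 * pdr h2 t r + ζ t r := by
  have hpdr : pdr h2Y t r
      = pdr h2 t r + (-2 / r ^ 2 * ζe t r + 2 / r * pdr ζe t r) := by
    have hinv : HasDerivAt (fun s : ℝ => 2 / s) (-2 / r ^ 2) r := by
      simpa [div_eq_mul_inv] using (hasDerivAt_inv hr).const_mul 2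
    have hderiv : HasDerivAt (fun s => h2Y t s)
        (pdr h2 t r + (-2 / r ^ 2 * ζe t r + 2 / r * pdr ζe t r)) r := by
      rw [show (fun s => h2Y t s) = _ from funext hh2Y]
      exact hh2.differentiableAt_slice_r.hasDerivAt.add
        (hinv.mul hζe.differentiableAt_slice_r.hasDerivAt)
    exact hderiv.deriv
  rw [hh1Y, hpdr]
  field_simp
  ring

end GaugeVector

theorem stmt_9_general (U : Set (ℝ × ℝ)) (hU : IsOpen U) (hrpos : ∀ p ∈ U, 0 < p.2)
    (f : ℝ → ℝ)
    (htt htr hrr h1t h1r h2 ζt ζr ζe : ℝ → ℝ → ℝ)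
    (hh2 : ContDiffOn ℝ 1 (fun p : ℝ × ℝ => h2 p.1 p.2) U)
    (hζt : ContDiffOn ℝ 1 (fun p : ℝ × ℝ => ζt p.1 p.2) U)
    (hζr : ContDiffOn ℝ 1 (fun p : ℝ × ℝ => ζr p.1 p.2) U)
    (hζe : ContDiffOn ℝ 1 (fun p : ℝ × ℝ => ζe p.1 p.2) U)
    (httY htrY hrrY h1tY h1rY h2Y : ℝ → ℝ → ℝ)
    (hhttY : ∀ t r, httY t r = htt t r + 2 * pdt ζt t r - f r * deriv f r * ζr t r)
    (hhtrY : ∀ t r, htrY t r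
        = htr t r + pdt ζr t r + pdr ζt t r - deriv f r / f r * ζt t r)
    (hhrrY : ∀ t r, hrrY t r = hrr t r + 2 * pdr ζr t r + deriv f r / f r * ζr t r)
    (hh1tY : ∀ t r, h1tY t r = h1t t r + ζt t r / r + pdt ζe t r)
    (hh1rY : ∀ t r, h1rY t r = h1r t r + ζr t r / r + pdr ζe t r - ζe t r / r)
    (hh2Y : ∀ t r, h2Y t r = h2 t r + 2 / r * ζe t r)
    (Yt Yr YtY YrY : ℝ → ℝ → ℝ)
    (hYt : ∀ t r, Yt t r = r * h1t t r - r ^ 2 / 2 * pdt h2 t r)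
    (hYr : ∀ t r, Yr t r = r * h1r t r - r ^ 2 / 2 * pdr h2 t r)
    (hYtC : ContDiffOn ℝ 1 (fun p : ℝ × ℝ => Yt p.1 p.2) U)
    (hYrC : ContDiffOn ℝ 1 (fun p : ℝ × ℝ => Yr p.1 p.2) U)
    (hYtY : ∀ t r, YtY t r = r * h1tY t r - r ^ 2 / 2 * pdt h2Y t r)
    (hYrY : ∀ t r, YrY t r = r * h1rY t r - r ^ 2 / 2 * pdr h2Y t r) :
    ∀ t r, (t, r) ∈ U →
      (httY t r - 2 * pdt YtY t r + f r * deriv f r * YrY t r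
          = htt t r - 2 * pdt Yt t r + f r * deriv f r * Yr t r) ∧
      (htrY t r - pdt YrY t r - pdr YtY t r + deriv f r / f r * YtY t r
          = htr t r - pdt Yr t r - pdr Yt t r + deriv f r / f r * Yt t r) ∧
      (hrrY t r - 2 * pdr YrY t r - deriv f r / f r * YrY t r
          = hrr t r - 2 * pdr Yr t r - deriv f r / f r * Yr t r) := by
  intro t r hp
  have hdiff {g : ℝ → ℝ → ℝ} (hg : ContDiffOn ℝ 1 (fun p : ℝ × ℝ => g p.1 p.2) U)
      {q : ℝ × ℝ} (hq : q ∈ U) : DifferentiableAt ℝ (fun p : ℝ × ℝ => g p.1 p.2) q :=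
    (hg.differentiableOn one_ne_zero).differentiableAt (hU.mem_nhds hq)
  have hYtY_eq : ∀ q ∈ U, YtY q.1 q.2 = Yt q.1 q.2 + ζt q.1 q.2 := fun q hq => by
    rw [hYtY, hYt]
    exact gaugeVector_t_shift (hrpos q hq).ne' (hdiff hh2 hq) (hdiff hζe hq) (hh1tY _ _)
      fun s => hh2Y s _
  have hYrY_eq : ∀ q ∈ U, YrY q.1 q.2 = Yr q.1 q.2 + ζr q.1 q.2 := fun q hq => by
    rw [hYrY, hYr]
    exact gaugeVector_r_shift (hrpos q hq).ne' (hdiff hh2 hq) (hdiff hζe hq) (hh1rY _ _)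
      fun s => hh2Y _ s
  refine ⟨?_, ?_, ?_⟩
  · rw [hhttY, pdt_eq_add_of_eqOn hU hYtY_eq (hdiff hYtC hp) (hdiff hζt hp) hp,
      hYrY_eq _ hp]
    ring
  · rw [hhtrY, pdt_eq_add_of_eqOn hU hYrY_eq (hdiff hYrC hp) (hdiff hζr hp) hp,
      pdr_eq_add_of_eqOn hU hYtY_eq (hdiff hYtC hp) (hdiff hζt hp) hp, hYtY_eq _ hp]
    ring
  · rw [hhrrY, pdr_eq_add_of_eqOn hU hYrY_eq (hdiff hYrC hp) (hdiff hζr hp) hp,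
      hYrY_eq _ hp]
    ring

/-- Gauge invariance of the even-parity tensor components
`F_tt := h_tt − 2∂_t Y_t + f f' Y_r`, `F_tr := h_tr − ∂_t Y_r − ∂_r Y_t + (f'/f) Y_t`,
`F_rr := h_rr − 2∂_r Y_r − (f'/f) Y_r`, where `Y_A := r h₁A − (r²/2) ∂_A h₂`, under the
second-kind gauge transformation of the even-parity metric perturbation components. -/
theorem stmt_9 (U : Set (ℝ × ℝ)) (hU : IsOpen U) (hrpos : ∀ p ∈ U, 0 < p.2)
    (f : ℝ → ℝ) (hfd : DifferentiableOn ℝ f (Set.Ioi 0)) (hfne : ∀ p ∈ U, f p.2 ≠ 0)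
    (htt htr hrr h1t h1r h2 ζt ζr ζe : ℝ → ℝ → ℝ)
    (hhtt : ContDiffOn ℝ 1 (fun p : ℝ × ℝ => htt p.1 p.2) U)
    (hhtr : ContDiffOn ℝ 1 (fun p : ℝ × ℝ => htr p.1 p.2) U)
    (hhrr : ContDiffOn ℝ 1 (fun p : ℝ × ℝ => hrr p.1 p.2) U)
    (hh1t : ContDiffOn ℝ 1 (fun p : ℝ × ℝ => h1t p.1 p.2) U)
    (hh1r : ContDiffOn ℝ 1 (fun p : ℝ × ℝ => h1r p.1 p.2) U)
    (hh2 : ContDiffOn ℝ 1 (fun p : ℝ × ℝ => h2 p.1 p.2) U)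
    (hζt : ContDiffOn ℝ 1 (fun p : ℝ × ℝ => ζt p.1 p.2) U)
    (hζr : ContDiffOn ℝ 1 (fun p : ℝ × ℝ => ζr p.1 p.2) U)
    (hζe : ContDiffOn ℝ 1 (fun p : ℝ × ℝ => ζe p.1 p.2) U)
    (httY htrY hrrY h1tY h1rY h2Y : ℝ → ℝ → ℝ)
    (hhttY : ∀ t r, httY t r = htt t r + 2 * pdt ζt t r - f r * deriv f r * ζr t r)
    (hhtrY : ∀ t r, htrY t r
        = htr t r + pdt ζr t r + pdr ζt t r - deriv f r / f r * ζt t r)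
    (hhrrY : ∀ t r, hrrY t r = hrr t r + 2 * pdr ζr t r + deriv f r / f r * ζr t r)
    (hh1tY : ∀ t r, h1tY t r = h1t t r + ζt t r / r + pdt ζe t r)
    (hh1rY : ∀ t r, h1rY t r = h1r t r + ζr t r / r + pdr ζe t r - ζe t r / r)
    (hh2Y : ∀ t r, h2Y t r = h2 t r + 2 / r * ζe t r)
    (Yt Yr YtY YrY : ℝ → ℝ → ℝ)
    (hYt : ∀ t r, Yt t r = r * h1t t r - r ^ 2 / 2 * pdt h2 t r)
    (hYr : ∀ t r, Yr t r = r * h1r t r - r ^ 2 / 2 * pdr h2 t r)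
    (hYtC : ContDiffOn ℝ 1 (fun p : ℝ × ℝ => Yt p.1 p.2) U)
    (hYrC : ContDiffOn ℝ 1 (fun p : ℝ × ℝ => Yr p.1 p.2) U)
    (hYtY : ∀ t r, YtY t r = r * h1tY t r - r ^ 2 / 2 * pdt h2Y t r)
    (hYrY : ∀ t r, YrY t r = r * h1rY t r - r ^ 2 / 2 * pdr h2Y t r) :
    ∀ t r, (t, r) ∈ U →
      (httY t r - 2 * pdt YtY t r + f r * deriv f r * YrY t r
          = htt t r - 2 * pdt Yt t r + f r * deriv f r * Yr t r) ∧
      (htrY t r - pdt YrY t r - pdr YtY t r + deriv f r / f r * YtY t r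
          = htr t r - pdt Yr t r - pdr Yt t r + deriv f r / f r * Yt t r) ∧
      (hrrY t r - 2 * pdr YrY t r - deriv f r / f r * YrY t r
          = hrr t r - 2 * pdr Yr t r - deriv f r / f r * Yr t r) :=
  stmt_9_general U hU hrpos f htt htr hrr h1t h1r h2 ζt ζr ζe hh2 hζt hζr hζe httY htrY hrrY h1tY
    h1rY h2Y hhttY hhtrY hhrrY hh1tY hh1rY hh2Y Yt Yr YtY YrY hYt hYr hYtC hYrC hYtY hYrY
end

section
/- Fix M > 0 and let f(r) = 1 − 2M/r on U = {(t, r) : r > 2M}. Let l be a natural number and let Z, T_r, T₂ : U → ℝ be smooth, and set Y := (r/f) Z. Then at every point of U, Y satisfies the odd-parity evolution equation ∂_t²Y − f ∂_r( f ∂_r Y ) + (2(2f−1)f/r) ∂_r Y + ((l−1)(l+2)/r²) f Y + ((1−f)(5f−1)/r²) Y = 16π r ( f T_r + r f ∂_r T₂ + (1−f) T₂ ) if and only if Z satisfies the Regge–Wheeler equation ∂_t²Z − f ∂_r( f ∂_r Z ) + (f/r²)( l(l+1) − 3(1−f) ) Z = 16π f ( f T_r + r ∂_r( f T₂ ) ).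 In fact, the left-hand side of the first equation equals (r/f) times the left-hand side of the second when Y = rZ/f, and likewise for the right-hand sides. -/
lemma stmt_10_aux {M : ℝ} {Z : ℝ → ℝ → ℝ}
    (hZ : ContDiffOn ℝ (⊤ : ℕ∞) (fun p : ℝ × ℝ => Z p.1 p.2) {p : ℝ × ℝ | 2*M < p.2}) (t : ℝ) :
    ContDiffOn ℝ (⊤ : ℕ∞) (fun s => Z t s) (Set.Ioi (2*M)) := by
  have h : ContDiff ℝ (⊤ : ℕ∞) (fun s : ℝ => ((t, s) : ℝ × ℝ)) := contDiff_const.prodMk contDiff_id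
  exact hZ.comp h.contDiffOn (fun s hs => hs)

set_option maxHeartbeats 1000000 in
/-- On the Schwarzschild exterior with `f(r) = 1 − 2M/r` and `Y := (r/f) Z`,
the odd-parity evolution equation for `Y` holds at a point of `{r > 2M}` iff the
Regge–Wheeler equation for `Z` holds there; in fact, the left-hand side of the former
equals `(r/f)` times the left-hand side of the latter, and likewise for the
right-hand sides. -/
theorem stmt_10 (M : ℝ) (hM : 0 < M) (f : ℝ → ℝ) (hf : ∀ r, f r = 1 - 2 * M / r)
    (l : ℕ) (Z Tr T2 Y : ℝ → ℝ → ℝ)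
    (hZ : ContDiffOn ℝ (⊤ : ℕ∞) (fun p : ℝ × ℝ => Z p.1 p.2) {p : ℝ × ℝ | 2 * M < p.2})
    (hTr : ContDiffOn ℝ (⊤ : ℕ∞) (fun p : ℝ × ℝ => Tr p.1 p.2) {p : ℝ × ℝ | 2 * M < p.2})
    (hT2 : ContDiffOn ℝ (⊤ : ℕ∞) (fun p : ℝ × ℝ => T2 p.1 p.2) {p : ℝ × ℝ | 2 * M < p.2})
    (hY : ∀ t r, Y t r = r / f r * Z t r) :
    ∀ t r, 2 * M < r →
      (pdt (pdt Y) t r - f r * pdr (fun t r => f r * pdr Y t r) t r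
            + 2 * (2 * f r - 1) * f r / r * pdr Y t r
            + ((l : ℝ) - 1) * ((l : ℝ) + 2) / r ^ 2 * f r * Y t r
            + (1 - f r) * (5 * f r - 1) / r ^ 2 * Y t r
          = 16 * Real.pi * r
              * (f r * Tr t r + r * f r * pdr T2 t r + (1 - f r) * T2 t r)
        ↔
        pdt (pdt Z) t r - f r * pdr (fun t r => f r * pdr Z t r) t r
            + f r / r ^ 2 * ((l : ℝ) * ((l : ℝ) + 1) - 3 * (1 - f r)) * Z t r
          = 16 * Real.pi * f r
              * (f r * Tr t r + r * pdr (fun t r => f r * T2 t r) t r)) ∧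
      (pdt (pdt Y) t r - f r * pdr (fun t r => f r * pdr Y t r) t r
            + 2 * (2 * f r - 1) * f r / r * pdr Y t r
            + ((l : ℝ) - 1) * ((l : ℝ) + 2) / r ^ 2 * f r * Y t r
            + (1 - f r) * (5 * f r - 1) / r ^ 2 * Y t r
          = r / f r
              * (pdt (pdt Z) t r - f r * pdr (fun t r => f r * pdr Z t r) t r
                  + f r / r ^ 2 * ((l : ℝ) * ((l : ℝ) + 1) - 3 * (1 - f r)) * Z t r)) ∧
      (16 * Real.pi * r * (f r * Tr t r + r * f r * pdr T2 t r + (1 - f r) * T2 t r)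
          = r / f r
              * (16 * Real.pi * f r
                  * (f r * Tr t r + r * pdr (fun t r => f r * T2 t r) t r))) := by
  have hfe : f = fun r => 1 - 2 * M / r := funext hf
  subst hfe
  intro t r hr
  have hr0 : (0:ℝ) < r := lt_trans (by linarith) hr
  have hq0 : r ≠ 0 := ne_of_gt hr0
  have hq1 : r - 2*M ≠ 0 := by intro h; rw [sub_eq_zero] at h; exact absurd h (ne_of_gt hr)
  have hq2 : 1 - 2*M/r ≠ 0 := by
    rw [show (1:ℝ) - 2*M/r = (r - 2*M)/r by field_simp]
    exact div_ne_zero hq1 hq0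
  -- Y in explicit form
  have hYgen : ∀ a b, 2*M < b → Y a b = b^2/(b-2*M) * Z a b := by
    intro a b hb
    have hb0 : b ≠ 0 := ne_of_gt (lt_trans (by linarith) hb)
    have hbM : b - 2*M ≠ 0 := by intro h; rw [sub_eq_zero] at h; exact absurd h (ne_of_gt hb)
    rw [hY]
    show b / (1 - 2*M/b) * Z a b = _
    rw [show (1:ℝ) - 2*M/b = (b - 2*M)/b by field_simp, div_div_eq_mul_div, sq]
  -- differentiability of slices
  have hZcd := stmt_10_aux hZ t
  have hT2cd := stmt_10_aux hT2 t
  have hZcd' : ContDiffOn ℝ (⊤ : ℕ∞) (deriv (fun s => Z t s)) (Set.Ioi (2*M)) :=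
    hZcd.deriv_of_isOpen isOpen_Ioi (by simp)
  have hZd : ∀ s, 2*M < s → HasDerivAt (fun x => Z t x) (deriv (fun x => Z t x) s) s :=
    fun s hs => ((hZcd.differentiableOn (by simp)).differentiableAt
      (isOpen_Ioi.mem_nhds hs)).hasDerivAt
  have hZd2 : HasDerivAt (deriv (fun x => Z t x)) (deriv (deriv (fun x => Z t x)) r) r :=
    ((hZcd'.differentiableOn (by simp)).differentiableAt (isOpen_Ioi.mem_nhds hr)).hasDerivAt
  have hT2d : HasDerivAt (fun x => T2 t x) (deriv (fun x => T2 t x) r) r :=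
    ((hT2cd.differentiableOn (by simp)).differentiableAt (isOpen_Ioi.mem_nhds hr)).hasDerivAt
  -- derivative of f
  have hfd : ∀ s : ℝ, s ≠ 0 → HasDerivAt (fun x : ℝ => 1 - 2*M/x) (2*M/s^2) s := by
    intro s hs
    have h : HasDerivAt (fun x : ℝ => 1 - 2*M*x⁻¹) (0 - 2*M*(-(s^2)⁻¹)) s :=
      (hasDerivAt_const s 1).sub ((hasDerivAt_inv hs).const_mul (2*M))
    simp only [div_eq_mul_inv, mul_neg, zero_sub, neg_neg] at h ⊢
    exact h
  -- derivative of A s = s²/(s-2M)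
  have hA : ∀ s : ℝ, s - 2*M ≠ 0 →
      HasDerivAt (fun x : ℝ => x^2/(x-2*M)) ((2*s*(s-2*M) - s^2*1)/(s-2*M)^2) s := by
    intro s hs
    have h1 : HasDerivAt (fun x : ℝ => x^2) (2*s) s := by
      simpa using hasDerivAt_pow 2 s
    have h2 : HasDerivAt (fun x : ℝ => x - 2*M) 1 s := (hasDerivAt_id s).sub_const _
    exact h1.div h2 hs
  -- pdr Y on the open set
  have hpdrY : ∀ s, 2*M < s → pdr Y t s =
      (2*s*(s-2*M) - s^2*1)/(s-2*M)^2 * Z t s + s^2/(s-2*M) * deriv (fun x => Z t x) s := by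
    intro s hs
    have hsM : s - 2*M ≠ 0 := by intro h; rw [sub_eq_zero] at h; exact absurd h (ne_of_gt hs)
    have heq : (fun x => Y t x) =ᶠ[nhds s] (fun x => x^2/(x-2*M) * Z t x) :=
      Filter.eventuallyEq_of_mem (isOpen_Ioi.mem_nhds hs) (fun x hx => hYgen t x hx)
    show deriv (fun x => Y t x) s = _
    rw [heq.deriv_eq]
    exact ((hA s hsM).mul (hZd s hs)).deriv
  -- f * pdr Y simplified on the open set
  have hFeq : ∀ s, 2*M < s → (1 - 2*M/s) * pdr Y t s =
      (s-4*M)/(s-2*M) * Z t s + s * deriv (fun x => Z t x) s := by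
    intro s hs
    have hs0 : s ≠ 0 := ne_of_gt (lt_trans (by linarith) hs)
    have hsM : s - 2*M ≠ 0 := by intro h; rw [sub_eq_zero] at h; exact absurd h (ne_of_gt hs)
    rw [hpdrY s hs]
    field_simp
    ring
  -- derivative of B s = (s-4M)/(s-2M)
  have hB : HasDerivAt (fun x : ℝ => (x-4*M)/(x-2*M)) ((1*(r-2*M) - (r-4*M)*1)/(r-2*M)^2) r := by
    have h1 : HasDerivAt (fun x : ℝ => x - 4*M) 1 r := (hasDerivAt_id r).sub_const _
    have h2 : HasDerivAt (fun x : ℝ => x - 2*M) 1 r := (hasDerivAt_id r).sub_const _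
    exact h1.div h2 hq1
  -- key derivative computations
  have H3 : deriv (fun s => (1 - 2*M/s) * pdr Y t s) r
      = ((1*(r-2*M) - (r-4*M)*1)/(r-2*M)^2 * Z t r + (r-4*M)/(r-2*M) * deriv (fun x => Z t x) r)
        + (1 * deriv (fun x => Z t x) r + r * deriv (deriv (fun x => Z t x)) r) := by
    have heq : (fun s => (1 - 2*M/s) * pdr Y t s)
        =ᶠ[nhds r] (fun s => (s-4*M)/(s-2*M) * Z t s + s * deriv (fun x => Z t x) s) :=
      Filter.eventuallyEq_of_mem (isOpen_Ioi.mem_nhds hr) (fun s hs => hFeq s hs)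
    rw [heq.deriv_eq]
    exact ((hB.mul (hZd r hr)).add ((hasDerivAt_id r).mul hZd2)).deriv
  have H4 : deriv (fun s => (1 - 2*M/s) * deriv (fun x => Z t x) s) r
      = 2*M/r^2 * deriv (fun x => Z t x) r + (1 - 2*M/r) * deriv (deriv (fun x => Z t x)) r :=
    ((hfd r hq0).mul hZd2).deriv
  have H5 : deriv (fun s => (1 - 2*M/s) * T2 t s) r
      = 2*M/r^2 * T2 t r + (1 - 2*M/r) * deriv (fun x => T2 t x) r :=
    ((hfd r hq0).mul hT2d).deriv
  have H1 : deriv (fun s => deriv (fun x => Y x r) s) t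
      = r^2/(r-2*M) * deriv (fun s => deriv (fun x => Z x r) s) t := by
    have e1 : (fun x => Y x r) = fun x => r^2/(r-2*M) * Z x r := by
      funext x; exact hYgen x r hr
    rw [e1]
    have e2 : (fun s => deriv (fun x => r^2/(r-2*M) * Z x r) s)
        = fun s => r^2/(r-2*M) * deriv (fun x => Z x r) s := by
      funext s; exact deriv_const_mul_field _
    rw [e2, deriv_const_mul_field]
  have hYr : Y t r = r^2/(r-2*M) * Z t r := hYgen t r hr
  have hpdrYr := hpdrY r hr
  -- the three bullets
  have key2 : pdt (pdt Y) t r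
        - (1 - 2*M/r) * pdr (fun t r => (1 - 2*M/r) * pdr Y t r) t r
        + 2 * (2 * (1 - 2*M/r) - 1) * (1 - 2*M/r) / r * pdr Y t r
        + ((l : ℝ) - 1) * ((l : ℝ) + 2) / r ^ 2 * (1 - 2*M/r) * Y t r
        + (1 - (1 - 2*M/r)) * (5 * (1 - 2*M/r) - 1) / r ^ 2 * Y t r
      = r / (1 - 2*M/r)
          * (pdt (pdt Z) t r - (1 - 2*M/r) * pdr (fun t r => (1 - 2*M/r) * pdr Z t r) t r
              + (1 - 2*M/r) / r ^ 2 * ((l : ℝ) * ((l : ℝ) + 1) - 3 * (1 - (1 - 2*M/r))) * Z t r) := by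
    show deriv (fun s => deriv (fun x => Y x r) s) t
        - (1 - 2*M/r) * deriv (fun s => (1 - 2*M/s) * pdr Y t s) r + _ + _ + _ = _
    rw [H1, H3, hpdrYr, hYr]
    show _ = r / (1 - 2*M/r) * (deriv (fun s => deriv (fun x => Z x r) s) t
        - (1 - 2*M/r) * deriv (fun s => (1 - 2*M/s) * deriv (fun x => Z t x) s) r + _)
    rw [H4]
    field_simp
    ring
  have key3 : 16 * Real.pi * r * ((1 - 2*M/r) * Tr t r + r * (1 - 2*M/r) * pdr T2 t r
        + (1 - (1 - 2*M/r)) * T2 t r)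
      = r / (1 - 2*M/r) * (16 * Real.pi * (1 - 2*M/r)
          * ((1 - 2*M/r) * Tr t r + r * pdr (fun t r => (1 - 2*M/r) * T2 t r) t r)) := by
    show _ = r / (1 - 2*M/r) * (16 * Real.pi * (1 - 2*M/r)
        * ((1 - 2*M/r) * Tr t r + r * deriv (fun s => (1 - 2*M/s) * T2 t s) r))
    rw [H5]
    show 16 * Real.pi * r * ((1 - 2*M/r) * Tr t r
        + r * (1 - 2*M/r) * deriv (fun x => T2 t x) r + (1 - (1 - 2*M/r)) * T2 t r) = _
    field_simp
    ring
  refine ⟨?_, key2, key3⟩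
  rw [key2, key3]
  exact mul_right_inj' (div_ne_zero hq0 hq2)
end

section
/- Fix M > 0 and let f(r) = 1 − 2M/r on U = {(t, r) : r > 2M}. Let l be a natural number with L = l(l+1), and let X, Y, T_r, T₂ : U → ℝ be smooth and satisfy on U: (i) the constraint ∂_t X = f f' Y + f² ∂_r Y + 16π r² f T₂, and (ii) the evolution equation ∂_t²Y − f ∂_r( f ∂_r Y ) + (2(2f−1)f/r) ∂_r Y + ((L−2)/r²) f Y + ((1−f)(5f−1)/r²) Y = 16π r ( f T_r + r f ∂_r T₂ + (1−f) T₂ ). Define Φ := 2r ∂_r X − 4X − 2r ∂_t Y. Then ∂_t Φ = 2(L−2)(f/r) Y − 32π r² f T_r on U. -/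
open Filter Topology

lemma lineT (r : ℝ) (t : ℝ) : HasDerivAt (fun s : ℝ => ((s, r) : ℝ × ℝ)) (1, 0) t :=
  (hasDerivAt_id t).prodMk (hasDerivAt_const t r)

lemma lineR (t : ℝ) (r : ℝ) : HasDerivAt (fun s : ℝ => ((t, s) : ℝ × ℝ)) (0, 1) r :=
  (hasDerivAt_const r t).prodMk (hasDerivAt_id r)

lemma aux_derivs {g : ℝ → ℝ → ℝ} {U : Set (ℝ × ℝ)} {t r : ℝ}
    (hU : IsOpen U) (hg : ContDiffOn ℝ (⊤ : ℕ∞) (fun p : ℝ × ℝ => g p.1 p.2) U)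
    (hmem : (t, r) ∈ U) :
    HasDerivAt (fun s => g s r) (pdt g t r) t ∧
    HasDerivAt (fun s => g t s) (pdr g t r) r ∧
    HasDerivAt (fun s => pdr g s r) (pdt (pdr g) t r) t ∧
    HasDerivAt (fun s => pdt g t s) (pdr (pdt g) t r) r ∧
    HasDerivAt (fun s => pdr g t s) (pdr (pdr g) t r) r ∧
    HasDerivAt (fun s => pdt g s r) (pdt (pdt g) t r) t ∧
    pdt (pdr g) t r = pdr (pdt g) t r := by
  set F : ℝ × ℝ → ℝ := fun p => g p.1 p.2 with hF
  have hsm : ∀ p ∈ U, ContDiffAt ℝ (⊤ : ℕ∞) F p := fun p hp => hg.contDiffAt (hU.mem_nhds hp)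
  set F1 : ℝ × ℝ → (ℝ × ℝ) →L[ℝ] ℝ := fderiv ℝ F with hF1def
  have hF1 : ∀ p ∈ U, HasFDerivAt F (F1 p) p := fun p hp =>
    ((hsm p hp).differentiableAt (by simp)).hasFDerivAt
  have hF1c : ContDiffAt ℝ (⊤ : ℕ∞) F1 (t, r) := (hsm _ hmem).fderiv_right (by simp)
  set F2 : (ℝ × ℝ) →L[ℝ] (ℝ × ℝ) →L[ℝ] ℝ := fderiv ℝ F1 (t, r) with hF2def
  have hF2 : HasFDerivAt F1 F2 (t, r) := (hF1c.differentiableAt (by simp)).hasFDerivAt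
  have hsymm : ∀ v w, F2 v w = F2 w v := by
    intro v w
    exact second_derivative_symmetric_of_eventually
      ((hU.eventually_mem hmem).mono (fun p hp => hF1 p hp)) hF2 v w
  -- first partials as F1 applications, for any point of U
  have h1t : ∀ p ∈ U, HasDerivAt (fun s => g s p.2) (F1 p (1, 0)) p.1 := by
    intro p hp
    exact (hF1 p hp).comp_hasDerivAt p.1 (lineT p.2 p.1)
  have h1r : ∀ p ∈ U, HasDerivAt (fun s => g p.1 s) (F1 p (0, 1)) p.2 := by
    intro p hp
    exact (hF1 p hp).comp_hasDerivAt p.2 (lineR p.1 p.2)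
  have hpdt : ∀ p ∈ U, pdt g p.1 p.2 = F1 p (1, 0) := fun p hp => (h1t p hp).deriv
  have hpdr : ∀ p ∈ U, pdr g p.1 p.2 = F1 p (0, 1) := fun p hp => (h1r p hp).deriv
  -- derivative of F1 along lines
  have hL1 : HasDerivAt (fun s => F1 (s, r)) (F2 (1, 0)) t :=
    hF2.comp_hasDerivAt t (lineT r t)
  have hL2 : HasDerivAt (fun s => F1 (t, s)) (F2 (0, 1)) r :=
    hF2.comp_hasDerivAt r (lineR t r)
  have hmix : ∀ v : ℝ × ℝ, HasDerivAt (fun s => F1 (s, r) v) (F2 (1, 0) v) t := by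
    intro v
    simpa using hL1.clm_apply (hasDerivAt_const t v)
  have hmix' : ∀ v : ℝ × ℝ, HasDerivAt (fun s => F1 (t, s) v) (F2 (0, 1) v) r := by
    intro v
    simpa using hL2.clm_apply (hasDerivAt_const r v)
  -- eventual membership along the lines
  have hevT : ∀ᶠ s in 𝓝 t, (s, r) ∈ U :=
    (lineT r t).continuousAt.preimage_mem_nhds (hU.mem_nhds hmem)
  have hevR : ∀ᶠ s in 𝓝 r, (t, s) ∈ U :=
    (lineR t r).continuousAt.preimage_mem_nhds (hU.mem_nhds hmem)
  have h3 : HasDerivAt (fun s => pdr g s r) (F2 (1, 0) (0, 1)) t := by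
    refine (hmix (0, 1)).congr_of_eventuallyEq ?_
    filter_upwards [hevT] with s hs using hpdr (s, r) hs
  have h4 : HasDerivAt (fun s => pdt g t s) (F2 (0, 1) (1, 0)) r := by
    refine (hmix' (1, 0)).congr_of_eventuallyEq ?_
    filter_upwards [hevR] with s hs using hpdt (t, s) hs
  have h5 : HasDerivAt (fun s => pdr g t s) (F2 (0, 1) (0, 1)) r := by
    refine (hmix' (0, 1)).congr_of_eventuallyEq ?_
    filter_upwards [hevR] with s hs using hpdr (t, s) hs
  have h6 : HasDerivAt (fun s => pdt g s r) (F2 (1, 0) (1, 0)) t := by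
    refine (hmix (1, 0)).congr_of_eventuallyEq ?_
    filter_upwards [hevT] with s hs using hpdt (s, r) hs
  have e3 : pdt (pdr g) t r = F2 (1, 0) (0, 1) := h3.deriv
  have e4 : pdr (pdt g) t r = F2 (0, 1) (1, 0) := h4.deriv
  have e5 : pdr (pdr g) t r = F2 (0, 1) (0, 1) := h5.deriv
  have e6 : pdt (pdt g) t r = F2 (1, 0) (1, 0) := h6.deriv
  exact ⟨by rw [hpdt _ hmem]; exact h1t _ hmem, by rw [hpdr _ hmem]; exact h1r _ hmem,
    e3 ▸ h3, e4 ▸ h4, e5 ▸ h5, e6 ▸ h6, by rw [e3, e4, hsymm]⟩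

set_option maxHeartbeats 2000000 in
/-- On the Schwarzschild exterior with `f(r) = 1 − 2M/r` and `L = l(l+1)`: if `X, Y` satisfy
the odd-parity constraint and the `r`-evolution equation with sources `T_r, T₂`, then the
Cunningham–Price–Moncrief variable `Φ := 2r ∂_r X − 4X − 2r ∂_t Y` satisfies
`∂_t Φ = 2(L−2)(f/r) Y − 32π r² f T_r` on `{r > 2M}`. -/
theorem stmt_11 (M : ℝ) (hM : 0 < M) (f : ℝ → ℝ) (hf : ∀ r, f r = 1 - 2 * M / r)
    (l : ℕ) (X Y Tr T2 Φ : ℝ → ℝ → ℝ)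
    (hX : ContDiffOn ℝ (⊤ : ℕ∞) (fun p : ℝ × ℝ => X p.1 p.2) {p : ℝ × ℝ | 2 * M < p.2})
    (hYs : ContDiffOn ℝ (⊤ : ℕ∞) (fun p : ℝ × ℝ => Y p.1 p.2) {p : ℝ × ℝ | 2 * M < p.2})
    (hTr : ContDiffOn ℝ (⊤ : ℕ∞) (fun p : ℝ × ℝ => Tr p.1 p.2) {p : ℝ × ℝ | 2 * M < p.2})
    (hT2 : ContDiffOn ℝ (⊤ : ℕ∞) (fun p : ℝ × ℝ => T2 p.1 p.2) {p : ℝ × ℝ | 2 * M < p.2})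
    (hconstraint : ∀ t r, 2 * M < r →
      pdt X t r = f r * deriv f r * Y t r + (f r) ^ 2 * pdr Y t r
        + 16 * Real.pi * r ^ 2 * f r * T2 t r)
    (hevolution : ∀ t r, 2 * M < r →
      pdt (pdt Y) t r - f r * pdr (fun t r => f r * pdr Y t r) t r
          + 2 * (2 * f r - 1) * f r / r * pdr Y t r
          + ((l : ℝ) * ((l : ℝ) + 1) - 2) / r ^ 2 * f r * Y t r
          + (1 - f r) * (5 * f r - 1) / r ^ 2 * Y t r
        = 16 * Real.pi * r
            * (f r * Tr t r + r * f r * pdr T2 t r + (1 - f r) * T2 t r))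
    (hΦ : ∀ t r, Φ t r = 2 * r * pdr X t r - 4 * X t r - 2 * r * pdt Y t r) :
    ∀ t r, 2 * M < r →
      pdt Φ t r = 2 * ((l : ℝ) * ((l : ℝ) + 1) - 2) * (f r / r) * Y t r
        - 32 * Real.pi * r ^ 2 * f r * Tr t r := by

  intro t r hr
  have hU : IsOpen {p : ℝ × ℝ | 2 * M < p.2} := isOpen_lt continuous_const continuous_snd
  have hmem : ((t, r) : ℝ × ℝ) ∈ {p : ℝ × ℝ | 2 * M < p.2} := hr
  have hrpos : 0 < r := lt_trans (by linarith) hr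
  have hr0 : r ≠ 0 := ne_of_gt hrpos
  obtain ⟨hXt, hXr, hXtr, hXrt, -, -, hXswap⟩ := aux_derivs hU hX hmem
  obtain ⟨hYt, hYr, -, -, hYrr, hYtt, -⟩ := aux_derivs hU hYs hmem
  obtain ⟨-, hT2r, -, -, -, -, -⟩ := aux_derivs hU hT2 hmem
  -- derivative of f
  have hfd' : ∀ s : ℝ, s ≠ 0 → HasDerivAt (fun x : ℝ => 1 - 2 * M / x) (2 * M / s ^ 2) s := by
    intro s hs
    have h1 : HasDerivAt (fun x : ℝ => 2 * M / x) ((0 * s - 2 * M * 1) / s ^ 2) s :=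
      (hasDerivAt_const s (2 * M)).div (hasDerivAt_id' s) hs
    have h2 := h1.const_sub 1
    refine h2.congr_deriv ?_
    ring
  have hfe : (fun x : ℝ => 1 - 2 * M / x) = f := funext fun x => (hf x).symm
  have hfd : ∀ s : ℝ, s ≠ 0 → HasDerivAt f (2 * M / s ^ 2) s := by
    intro s hs
    have := hfd' s hs
    rwa [hfe] at this
  -- step A : pdt Φ
  have hA : pdt Φ t r
      = 2 * r * pdt (pdr X) t r - 4 * pdt X t r - 2 * r * pdt (pdt Y) t r := by
    have hfun : (fun s => Φ s r)
        = fun s => 2 * r * pdr X s r - 4 * X s r - 2 * r * pdt Y s r :=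
      funext fun s => hΦ s r
    have h : HasDerivAt (fun s => 2 * r * pdr X s r - 4 * X s r - 2 * r * pdt Y s r)
        (2 * r * pdt (pdr X) t r - 4 * pdt X t r - 2 * r * pdt (pdt Y) t r) t :=
      ((hXtr.const_mul (2 * r)).sub (hXt.const_mul 4)).sub (hYtt.const_mul (2 * r))
    have : pdt Φ t r = deriv (fun s => Φ s r) t := rfl
    rw [this, hfun]
    exact h.deriv
  -- step B : pdr (pdt X)
  have h1 : HasDerivAt (fun x : ℝ => 1 - 2 * M / x) (2 * M / r ^ 2) r := hfd' r hr0
  have h2 : HasDerivAt (fun s : ℝ => 2 * M / s ^ 2) (-(4 * M / r ^ 3)) r := by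
    have h := (hasDerivAt_const r (2 * M)).div (hasDerivAt_pow 2 r) (pow_ne_zero 2 hr0)
    refine h.congr_deriv ?_
    field_simp
    ring
  have h3 : HasDerivAt (fun s : ℝ => (1 - 2 * M / s) ^ 2)
      (2 * (1 - 2 * M / r) * (2 * M / r ^ 2)) r := by
    have h := h1.pow 2
    refine h.congr_deriv ?_
    ring
  have h4 : HasDerivAt (fun s : ℝ => 16 * Real.pi * s ^ 2 * (1 - 2 * M / s))
      (16 * Real.pi * (2 * r) * (1 - 2 * M / r) + 16 * Real.pi * r ^ 2 * (2 * M / r ^ 2)) r := by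
    have h := ((hasDerivAt_pow 2 r).const_mul (16 * Real.pi)).mul h1
    refine h.congr_deriv ?_
    ring
  have hB : pdr (pdt X) t r
      = (2 * M / r ^ 2) * (2 * M / r ^ 2) * Y t r
        + (1 - 2 * M / r) * (-(4 * M / r ^ 3)) * Y t r
        + (1 - 2 * M / r) * (2 * M / r ^ 2) * pdr Y t r
        + 2 * (1 - 2 * M / r) * (2 * M / r ^ 2) * pdr Y t r
        + (1 - 2 * M / r) ^ 2 * pdr (pdr Y) t r
        + (16 * Real.pi * (2 * r) * (1 - 2 * M / r)
            + 16 * Real.pi * r ^ 2 * (2 * M / r ^ 2)) * T2 t r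
        + 16 * Real.pi * r ^ 2 * (1 - 2 * M / r) * pdr T2 t r := by
    have hDg : HasDerivAt
        (fun s => (1 - 2 * M / s) * (2 * M / s ^ 2) * Y t s
          + (1 - 2 * M / s) ^ 2 * pdr Y t s
          + 16 * Real.pi * s ^ 2 * (1 - 2 * M / s) * T2 t s)
        ((2 * M / r ^ 2) * (2 * M / r ^ 2) * Y t r
          + (1 - 2 * M / r) * (-(4 * M / r ^ 3)) * Y t r
          + (1 - 2 * M / r) * (2 * M / r ^ 2) * pdr Y t r
          + 2 * (1 - 2 * M / r) * (2 * M / r ^ 2) * pdr Y t r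
          + (1 - 2 * M / r) ^ 2 * pdr (pdr Y) t r
          + (16 * Real.pi * (2 * r) * (1 - 2 * M / r)
              + 16 * Real.pi * r ^ 2 * (2 * M / r ^ 2)) * T2 t r
          + 16 * Real.pi * r ^ 2 * (1 - 2 * M / r) * pdr T2 t r) r := by
      have h := (((h1.mul h2).mul hYr).add (h3.mul hYrr)).add (h4.mul hT2r)
      refine h.congr_deriv ?_
      simp only [Pi.mul_apply]
      ring
    have hev : (fun s => pdt X t s) =ᶠ[𝓝 r]
        (fun s => (1 - 2 * M / s) * (2 * M / s ^ 2) * Y t s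
          + (1 - 2 * M / s) ^ 2 * pdr Y t s
          + 16 * Real.pi * s ^ 2 * (1 - 2 * M / s) * T2 t s) := by
      filter_upwards [eventually_mem_set.2 (Ioi_mem_nhds hr)] with s hs
      have hs' : 2 * M < s := hs
      have hs0 : s ≠ 0 := ne_of_gt (lt_trans (by linarith) hs')
      rw [hconstraint t s hs', hf s, (hfd s hs0).deriv]
    exact (hDg.congr_of_eventuallyEq hev).deriv
  -- step C : the inner radial derivative in the evolution equation
  have hC : pdr (fun t r => f r * pdr Y t r) t r
      = (2 * M / r ^ 2) * pdr Y t r + (1 - 2 * M / r) * pdr (pdr Y) t r := by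
    have hrfl : pdr (fun t r => f r * pdr Y t r) t r
        = deriv (fun s => f s * pdr Y t s) r := rfl
    have hfun : (fun s => f s * pdr Y t s) = fun s => (1 - 2 * M / s) * pdr Y t s :=
      funext fun s => by rw [hf s]
    rw [hrfl, hfun]
    exact (h1.mul hYrr).deriv
  -- step D : pdt (pdt Y) from the evolution equation
  have hD : pdt (pdt Y) t r
      = (1 - 2 * M / r) * ((2 * M / r ^ 2) * pdr Y t r + (1 - 2 * M / r) * pdr (pdr Y) t r)
        - 2 * (2 * (1 - 2 * M / r) - 1) * (1 - 2 * M / r) / r * pdr Y t r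
        - ((l : ℝ) * ((l : ℝ) + 1) - 2) / r ^ 2 * (1 - 2 * M / r) * Y t r
        - (1 - (1 - 2 * M / r)) * (5 * (1 - 2 * M / r) - 1) / r ^ 2 * Y t r
        + 16 * Real.pi * r * ((1 - 2 * M / r) * Tr t r
            + r * (1 - 2 * M / r) * pdr T2 t r + (1 - (1 - 2 * M / r)) * T2 t r) := by
    have E := hevolution t r hr
    rw [hC] at E
    simp only [hf] at E
    linarith
  -- step E : the constraint at (t, r)
  have hE : pdt X t r
      = (1 - 2 * M / r) * (2 * M / r ^ 2) * Y t r
        + (1 - 2 * M / r) ^ 2 * pdr Y t r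
        + 16 * Real.pi * r ^ 2 * (1 - 2 * M / r) * T2 t r := by
    have h := hconstraint t r hr
    rw [hf r, (hfd r hr0).deriv] at h
    linarith
  -- conclude
  rw [hA, hXswap, hB, hE, hD, hf r]
  field_simp
  ring
end

section
/- Fix M > 0 and let f(r) = 1 − 2M/r on U = {(t, r) : r > 2M}. Let l be a natural number with L = l(l+1), and let X, Y, T_t, T₂ : U → ℝ be smooth and satisfy on U: (i) the constraint ∂_t X = f f' Y + f² ∂_r Y + 16π r² f T₂, and (ii) the evolution equation (1/f) ∂_t²X − f ∂_r²X − (2(1−f)/r²) X + (L/r²) X − ((1−3f)/r) ∂_t Y = 16π r ( T_t + r ∂_t T₂ ). Define Φ := 2r ∂_r X − 4X − 2r ∂_t Y. Then ∂_r Φ = −(1/r) Φ + (2(L−2)/(r f)) X − 32π (r²/f) T_t on U. -/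
open Topology

section Helpers

variable {M : ℝ} {G : ℝ → ℝ → ℝ}

lemma isOpenUU (M : ℝ) : IsOpen {p : ℝ × ℝ | 2 * M < p.2} :=
  isOpen_lt continuous_const continuous_snd

lemma diffAtUU (hG : ContDiffOn ℝ (⊤ : ℕ∞) (fun p : ℝ × ℝ => G p.1 p.2) {p : ℝ × ℝ | 2 * M < p.2})
    (t r : ℝ) (hr : 2 * M < r) :
    DifferentiableAt ℝ (fun p : ℝ × ℝ => G p.1 p.2) (t, r) :=
  (hG.contDiffAt ((isOpenUU M).mem_nhds hr)).differentiableAt (by simp)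

lemma hasDerivAt_pdt (hG : ContDiffOn ℝ (⊤ : ℕ∞) (fun p : ℝ × ℝ => G p.1 p.2) {p : ℝ × ℝ | 2 * M < p.2})
    (t r : ℝ) (hr : 2 * M < r) :
    HasDerivAt (fun s => G s r) (fderiv ℝ (fun p : ℝ × ℝ => G p.1 p.2) (t, r) (1, 0)) t :=
  by have h := (diffAtUU hG t r hr).hasFDerivAt.comp_hasDerivAt t
      ((hasDerivAt_id t).prodMk (hasDerivAt_const t r)); exact h

lemma hasDerivAt_pdr (hG : ContDiffOn ℝ (⊤ : ℕ∞) (fun p : ℝ × ℝ => G p.1 p.2) {p : ℝ × ℝ | 2 * M < p.2})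
    (t r : ℝ) (hr : 2 * M < r) :
    HasDerivAt (fun s => G t s) (fderiv ℝ (fun p : ℝ × ℝ => G p.1 p.2) (t, r) (0, 1)) r :=
  by have h := (diffAtUU hG t r hr).hasFDerivAt.comp_hasDerivAt r
      ((hasDerivAt_const r t).prodMk (hasDerivAt_id r)); exact h

lemma pdt_eq_fderiv (hG : ContDiffOn ℝ (⊤ : ℕ∞) (fun p : ℝ × ℝ => G p.1 p.2) {p : ℝ × ℝ | 2 * M < p.2})
    (t r : ℝ) (hr : 2 * M < r) :
    pdt G t r = fderiv ℝ (fun p : ℝ × ℝ => G p.1 p.2) (t, r) (1, 0) :=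
  (hasDerivAt_pdt hG t r hr).deriv

lemma pdr_eq_fderiv (hG : ContDiffOn ℝ (⊤ : ℕ∞) (fun p : ℝ × ℝ => G p.1 p.2) {p : ℝ × ℝ | 2 * M < p.2})
    (t r : ℝ) (hr : 2 * M < r) :
    pdr G t r = fderiv ℝ (fun p : ℝ × ℝ => G p.1 p.2) (t, r) (0, 1) :=
  (hasDerivAt_pdr hG t r hr).deriv

lemma hasDerivAt_pdt' (hG : ContDiffOn ℝ (⊤ : ℕ∞) (fun p : ℝ × ℝ => G p.1 p.2) {p : ℝ × ℝ | 2 * M < p.2})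
    (t r : ℝ) (hr : 2 * M < r) :
    HasDerivAt (fun s => G s r) (pdt G t r) t := by
  rw [pdt_eq_fderiv hG t r hr]; exact hasDerivAt_pdt hG t r hr

lemma hasDerivAt_pdr' (hG : ContDiffOn ℝ (⊤ : ℕ∞) (fun p : ℝ × ℝ => G p.1 p.2) {p : ℝ × ℝ | 2 * M < p.2})
    (t r : ℝ) (hr : 2 * M < r) :
    HasDerivAt (fun s => G t s) (pdr G t r) r := by
  rw [pdr_eq_fderiv hG t r hr]; exact hasDerivAt_pdr hG t r hr

lemma contDiffOn_fderiv_apply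
    (hG : ContDiffOn ℝ (⊤ : ℕ∞) (fun p : ℝ × ℝ => G p.1 p.2) {p : ℝ × ℝ | 2 * M < p.2}) (v : ℝ × ℝ) :
    ContDiffOn ℝ (⊤ : ℕ∞) (fun p : ℝ × ℝ => fderiv ℝ (fun q : ℝ × ℝ => G q.1 q.2) p v)
      {p : ℝ × ℝ | 2 * M < p.2} :=
  (ContinuousLinearMap.apply ℝ ℝ v).contDiff.comp_contDiffOn
    (hG.fderiv_of_isOpen (isOpenUU M) (by simp))

lemma contDiffOn_pdt
    (hG : ContDiffOn ℝ (⊤ : ℕ∞) (fun p : ℝ × ℝ => G p.1 p.2) {p : ℝ × ℝ | 2 * M < p.2}) :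
    ContDiffOn ℝ (⊤ : ℕ∞) (fun p : ℝ × ℝ => pdt G p.1 p.2) {p : ℝ × ℝ | 2 * M < p.2} :=
  (contDiffOn_fderiv_apply hG (1, 0)).congr fun p hp => pdt_eq_fderiv hG p.1 p.2 hp

lemma contDiffOn_pdr
    (hG : ContDiffOn ℝ (⊤ : ℕ∞) (fun p : ℝ × ℝ => G p.1 p.2) {p : ℝ × ℝ | 2 * M < p.2}) :
    ContDiffOn ℝ (⊤ : ℕ∞) (fun p : ℝ × ℝ => pdr G p.1 p.2) {p : ℝ × ℝ | 2 * M < p.2} :=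
  (contDiffOn_fderiv_apply hG (0, 1)).congr fun p hp => pdr_eq_fderiv hG p.1 p.2 hp

lemma clairaut (hG : ContDiffOn ℝ (⊤ : ℕ∞) (fun p : ℝ × ℝ => G p.1 p.2) {p : ℝ × ℝ | 2 * M < p.2})
    (t r : ℝ) (hr : 2 * M < r) :
    pdr (pdt G) t r = pdt (pdr G) t r := by
  set G' : ℝ × ℝ → ℝ := fun p => G p.1 p.2 with hG'
  have hU : {p : ℝ × ℝ | 2 * M < p.2} ∈ 𝓝 ((t, r) : ℝ × ℝ) := (isOpenUU M).mem_nhds hr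
  have hdiff : DifferentiableAt ℝ (fun p : ℝ × ℝ => fderiv ℝ G' p) (t, r) :=
    (((hG.fderiv_of_isOpen (m := (⊤ : ℕ∞)) (isOpenUU M) (by simp))).contDiffAt hU).differentiableAt (by simp)
  have key : ∀ v w : ℝ × ℝ, fderiv ℝ (fun p : ℝ × ℝ => fderiv ℝ G' p v) (t, r) w
      = fderiv ℝ (fderiv ℝ G') (t, r) w v := by
    intro v w
    have h3 : HasFDerivAt (fun p : ℝ × ℝ => fderiv ℝ G' p v)
        ((ContinuousLinearMap.apply ℝ ℝ v).comp (fderiv ℝ (fderiv ℝ G') (t, r))) (t, r) :=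
      (ContinuousLinearMap.apply ℝ ℝ v).hasFDerivAt.comp (t, r) hdiff.hasFDerivAt
    rw [h3.fderiv]; rfl
  have hsym : ∀ v w : ℝ × ℝ, fderiv ℝ (fderiv ℝ G') (t, r) v w
      = fderiv ℝ (fderiv ℝ G') (t, r) w v := by
    intro v w
    refine second_derivative_symmetric_of_eventually (f := G') ?_ hdiff.hasFDerivAt v w
    filter_upwards [hU] with y hy
    exact (diffAtUU hG y.1 y.2 hy).hasFDerivAt
  have h1 : pdr (pdt G) t r = fderiv ℝ (fun p : ℝ × ℝ => fderiv ℝ G' p (1, 0)) (t, r) (0, 1) := by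
    rw [pdr_eq_fderiv (contDiffOn_pdt hG) t r hr]
    have heq : fderiv ℝ (fun p : ℝ × ℝ => pdt G p.1 p.2) (t, r)
        = fderiv ℝ (fun p : ℝ × ℝ => fderiv ℝ G' p (1, 0)) (t, r) := by
      apply Filter.EventuallyEq.fderiv_eq
      filter_upwards [hU] with p hp
      exact pdt_eq_fderiv hG p.1 p.2 hp
    rw [heq]
  have h2 : pdt (pdr G) t r = fderiv ℝ (fun p : ℝ × ℝ => fderiv ℝ G' p (0, 1)) (t, r) (1, 0) := by
    rw [pdt_eq_fderiv (contDiffOn_pdr hG) t r hr]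
    have heq : fderiv ℝ (fun p : ℝ × ℝ => pdr G p.1 p.2) (t, r)
        = fderiv ℝ (fun p : ℝ × ℝ => fderiv ℝ G' p (0, 1)) (t, r) := by
      apply Filter.EventuallyEq.fderiv_eq
      filter_upwards [hU] with p hp
      exact pdr_eq_fderiv hG p.1 p.2 hp
    rw [heq]
  rw [h1, h2, key, key, hsym]

end Helpers

/-- On the Schwarzschild exterior with `f(r) = 1 − 2M/r` and `L = l(l+1)`: if `X, Y` satisfy
the odd-parity constraint and the `t`-evolution equation with sources `T_t, T₂`, then the
Cunningham–Price–Moncrief variable `Φ := 2r ∂_r X − 4X − 2r ∂_t Y` satisfies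
`∂_r Φ = −(1/r)Φ + (2(L−2)/(rf)) X − 32π (r²/f) T_t` on `{r > 2M}`. -/


theorem stmt_12 (M : ℝ) (hM : 0 < M) (f : ℝ → ℝ) (hf : ∀ r, f r = 1 - 2 * M / r)
    (l : ℕ) (X Y Tt T2 Φ : ℝ → ℝ → ℝ)
    (hX : ContDiffOn ℝ (⊤ : ℕ∞) (fun p : ℝ × ℝ => X p.1 p.2) {p : ℝ × ℝ | 2 * M < p.2})
    (hYs : ContDiffOn ℝ (⊤ : ℕ∞) (fun p : ℝ × ℝ => Y p.1 p.2) {p : ℝ × ℝ | 2 * M < p.2})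
    (hTt : ContDiffOn ℝ (⊤ : ℕ∞) (fun p : ℝ × ℝ => Tt p.1 p.2) {p : ℝ × ℝ | 2 * M < p.2})
    (hT2 : ContDiffOn ℝ (⊤ : ℕ∞) (fun p : ℝ × ℝ => T2 p.1 p.2) {p : ℝ × ℝ | 2 * M < p.2})
    (hconstraint : ∀ t r, 2 * M < r →
      pdt X t r = f r * deriv f r * Y t r + (f r) ^ 2 * pdr Y t r
        + 16 * Real.pi * r ^ 2 * f r * T2 t r)
    (hevolution : ∀ t r, 2 * M < r →
      (1 / f r) * pdt (pdt X) t r - f r * pdr (pdr X) t r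
          - 2 * (1 - f r) / r ^ 2 * X t r
          + (l : ℝ) * ((l : ℝ) + 1) / r ^ 2 * X t r
          - (1 - 3 * f r) / r * pdt Y t r
        = 16 * Real.pi * r * (Tt t r + r * pdt T2 t r))
    (hΦ : ∀ t r, Φ t r = 2 * r * pdr X t r - 4 * X t r - 2 * r * pdt Y t r) :
    ∀ t r, 2 * M < r →
      pdr Φ t r = -(1 / r) * Φ t r
        + 2 * ((l : ℝ) * ((l : ℝ) + 1) - 2) / (r * f r) * X t r
        - 32 * Real.pi * (r ^ 2 / f r) * Tt t r := by
  intro t r hr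
  have hr0 : (0:ℝ) < r := lt_trans (by linarith) hr
  have hF0 : f r ≠ 0 := by
    rw [hf r]
    have : 2 * M / r < 1 := (div_lt_one hr0).mpr hr
    linarith
  -- derivative of f
  have hderivf : deriv f r = 2 * M / r ^ 2 := by
    have hfun : f = fun x : ℝ => 1 - 2 * M / x := funext hf
    have h1 : HasDerivAt (fun x : ℝ => 1 - 2 * M / x) (2 * M / r ^ 2) r := by
      have h := ((hasDerivAt_inv hr0.ne').const_mul (2 * M)).const_sub 1
      have e : (2 * M / r ^ 2) = -(2 * M * -(r ^ 2)⁻¹) := by ring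
      have hf2 : (fun x : ℝ => 1 - 2 * M / x) = fun x => 1 - 2 * M * x⁻¹ := by funext x; ring
      rw [e, hf2]; exact h
    rw [hfun]
    exact h1.deriv
  have hrel : r * deriv f r = 1 - f r := by
    rw [hderivf, hf r]; field_simp; ring
  -- E1 : expand pdr Φ
  have h2s : HasDerivAt (fun s : ℝ => 2 * s) 2 r := by
    simpa using (hasDerivAt_id r).const_mul 2
  have h_X_s : HasDerivAt (fun s => X t s) (pdr X t r) r := hasDerivAt_pdr' hX t r hr
  have h_pdrX_s : HasDerivAt (fun s => pdr X t s) (pdr (pdr X) t r) r :=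
    hasDerivAt_pdr' (contDiffOn_pdr hX) t r hr
  have h_pdtY_s : HasDerivAt (fun s => pdt Y t s) (pdr (pdt Y) t r) r :=
    hasDerivAt_pdr' (contDiffOn_pdt hYs) t r hr
  have hΦs : HasDerivAt (fun s => Φ t s)
      (2 * pdr X t r + 2 * r * pdr (pdr X) t r - 4 * pdr X t r
        - (2 * pdt Y t r + 2 * r * pdr (pdt Y) t r)) r := by
    have h := ((h2s.mul h_pdrX_s).sub (h_X_s.const_mul 4)).sub (h2s.mul h_pdtY_s)
    have hfun2 : (fun s => Φ t s)
        = fun s => 2 * s * pdr X t s - 4 * X t s - 2 * s * pdt Y t s := funext (hΦ t)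
    rw [hfun2]
    exact h
  have hE1 : pdr Φ t r = 2 * pdr X t r + 2 * r * pdr (pdr X) t r - 4 * pdr X t r
      - (2 * pdt Y t r + 2 * r * pdr (pdt Y) t r) := hΦs.deriv
  -- E2 : t-derivative of the constraint
  have h_Y_t : HasDerivAt (fun u => Y u r) (pdt Y t r) t := hasDerivAt_pdt' hYs t r hr
  have h_pdrY_t : HasDerivAt (fun u => pdr Y u r) (pdt (pdr Y) t r) t :=
    hasDerivAt_pdt' (contDiffOn_pdr hYs) t r hr
  have h_T2_t : HasDerivAt (fun u => T2 u r) (pdt T2 t r) t := hasDerivAt_pdt' hT2 t r hr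
  have hE2 : pdt (pdt X) t r = f r * deriv f r * pdt Y t r + (f r) ^ 2 * pdt (pdr Y) t r
      + 16 * Real.pi * r ^ 2 * f r * pdt T2 t r := by
    have hcfun : (fun u => pdt X u r) = fun u => f r * deriv f r * Y u r
        + (f r) ^ 2 * pdr Y u r + 16 * Real.pi * r ^ 2 * f r * T2 u r :=
      funext fun u => hconstraint u r hr
    have hRHS : HasDerivAt (fun u => f r * deriv f r * Y u r + (f r) ^ 2 * pdr Y u r
        + 16 * Real.pi * r ^ 2 * f r * T2 u r)
        (f r * deriv f r * pdt Y t r + (f r) ^ 2 * pdt (pdr Y) t r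
          + 16 * Real.pi * r ^ 2 * f r * pdt T2 t r) t :=
      ((h_Y_t.const_mul _).add (h_pdrY_t.const_mul _)).add (h_T2_t.const_mul _)
    show deriv (fun u => pdt X u r) t = _
    rw [hcfun]
    exact hRHS.deriv
  -- Clairaut for Y
  have hcl : pdr (pdt Y) t r = pdt (pdr Y) t r := clairaut hYs t r hr
  -- solve for mixed derivative
  have hpval : pdt (pdr Y) t r = (pdt (pdt X) t r - f r * deriv f r * pdt Y t r
      - 16 * Real.pi * r ^ 2 * f r * pdt T2 t r) / (f r) ^ 2 := by
    rw [hE2]; field_simp; ring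
  -- solve for pdt pdt X from evolution
  have hs := hevolution t r hr
  have hs2 : pdt (pdt X) t r = f r * (f r * pdr (pdr X) t r
      + 2 * (1 - f r) / r ^ 2 * X t r - (l : ℝ) * ((l : ℝ) + 1) / r ^ 2 * X t r
      + (1 - 3 * f r) / r * pdt Y t r + 16 * Real.pi * r * (Tt t r + r * pdt T2 t r)) := by
    have h1 : (1 / f r) * pdt (pdt X) t r = f r * pdr (pdr X) t r
        + 2 * (1 - f r) / r ^ 2 * X t r - (l : ℝ) * ((l : ℝ) + 1) / r ^ 2 * X t r
        + (1 - 3 * f r) / r * pdt Y t r + 16 * Real.pi * r * (Tt t r + r * pdt T2 t r) := by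
      linarith
    calc pdt (pdt X) t r = f r * ((1 / f r) * pdt (pdt X) t r) := by field_simp
    _ = _ := by rw [h1]
  rw [hE1, hΦ t r, hcl, hpval, hs2, hderivf, hf r]
  have hne2 : r - 2 * M ≠ 0 := by linarith
  field_simp
  ring
end

section
/- Fix M > 0 and let f(r) = 1 − 2M/r on U = {(t, r) : r > 2M}. Let Φ, T_t, T_r : U → ℝ be smooth and satisfy the two first-order l = 1 odd-mode equations ∂_t Φ = −32π r² f T_r and ∂_r Φ = −(1/r) Φ − 32π (r²/f) T_t on U. Then Φ satisfies the l = 1 master equation ∂_t²Φ − f ∂_r( f ∂_r Φ ) + (f/r²)( 3f − 1 ) Φ = 32π r f ( ∂_r( r T_t ) − r ∂_t T_r ) on U. (Note 3f − 1 = l(l+1) − 3(1−f) for l = 1.) -/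
private lemma diffAux (M : ℝ) (g : ℝ → ℝ → ℝ)
    (hg : ContDiffOn ℝ (⊤ : ℕ∞) (fun p : ℝ × ℝ => g p.1 p.2) {p : ℝ × ℝ | 2 * M < p.2})
    (t r : ℝ) (hr : 2 * M < r) :
    DifferentiableAt ℝ (fun s => g t s) r ∧ DifferentiableAt ℝ (fun s => g s r) t := by
  have hU : IsOpen {p : ℝ × ℝ | 2 * M < p.2} := isOpen_lt continuous_const continuous_snd
  have hd : DifferentiableAt ℝ (fun p : ℝ × ℝ => g p.1 p.2) (t, r) :=
    (hg.contDiffAt (hU.mem_nhds (by simp [hr]))).differentiableAt (by simp)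
  constructor
  · exact hd.comp r ((differentiableAt_const t).prodMk differentiableAt_id)
  · exact (hd.comp t (show DifferentiableAt ℝ (fun s : ℝ => (id s, r)) t from
      differentiableAt_id.prodMk (differentiableAt_const r)))

/-- On the Schwarzschild exterior with `f(r) = 1 − 2M/r`: if `Φ` satisfies the two
first-order `l = 1` odd-mode equations `∂_t Φ = −32π r² f T_r` and
`∂_r Φ = −(1/r)Φ − 32π (r²/f) T_t`, then it satisfies the `l = 1` master equation
`∂_t²Φ − f ∂_r(f ∂_r Φ) + (f/r²)(3f − 1)Φ = 32π r f (∂_r(r T_t) − r ∂_t T_r)`. -/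
theorem stmt_14 (M : ℝ) (hM : 0 < M) (f : ℝ → ℝ) (hf : ∀ r, f r = 1 - 2 * M / r)
    (Φ Tt Tr : ℝ → ℝ → ℝ)
    (hΦs : ContDiffOn ℝ (⊤ : ℕ∞) (fun p : ℝ × ℝ => Φ p.1 p.2) {p : ℝ × ℝ | 2 * M < p.2})
    (hTt : ContDiffOn ℝ (⊤ : ℕ∞) (fun p : ℝ × ℝ => Tt p.1 p.2) {p : ℝ × ℝ | 2 * M < p.2})
    (hTr : ContDiffOn ℝ (⊤ : ℕ∞) (fun p : ℝ × ℝ => Tr p.1 p.2) {p : ℝ × ℝ | 2 * M < p.2})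
    (h1 : ∀ t r, 2 * M < r →
      pdt Φ t r = -(32 * Real.pi * r ^ 2 * f r * Tr t r))
    (h2 : ∀ t r, 2 * M < r →
      pdr Φ t r = -(1 / r) * Φ t r - 32 * Real.pi * (r ^ 2 / f r) * Tt t r) :
    ∀ t r, 2 * M < r →
      pdt (pdt Φ) t r - f r * pdr (fun t r => f r * pdr Φ t r) t r
          + f r / r ^ 2 * (3 * f r - 1) * Φ t r
        = 32 * Real.pi * r * f r
            * (pdr (fun t s => s * Tt t s) t r - r * pdt Tr t r) := by
  intro t r hr
  have hrpos : 0 < r := lt_trans (by linarith) hr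
  have hr0 : r ≠ 0 := ne_of_gt hrpos
  have hfr : f r ≠ 0 := by
    rw [hf]
    have : (0:ℝ) < 1 - 2 * M / r := by
      rw [sub_pos, div_lt_one hrpos]; exact hr
    exact ne_of_gt this
  set π := Real.pi
  -- differentiability facts
  obtain ⟨hTtr, hTtt⟩ := diffAux M Tt hTt t r hr
  obtain ⟨hTrr, hTrt⟩ := diffAux M Tr hTr t r hr
  obtain ⟨hΦr, hΦt⟩ := diffAux M Φ hΦs t r hr
  -- Step A : second time derivative
  have stepA : pdt (pdt Φ) t r = -(32 * π * r ^ 2 * f r) * pdt Tr t r := by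
    have hfun : (fun s => pdt Φ s r) = fun s => -(32 * π * r ^ 2 * f r) * Tr s r := by
      funext s; rw [h1 s r hr]; ring
    show deriv (fun s => pdt Φ s r) t = _
    rw [hfun, deriv_const_mul_field]
    rfl
  -- derivative facts in r
  have HΦ : HasDerivAt (fun s => Φ t s) (pdr Φ t r) r := hΦr.hasDerivAt
  have HTt' : HasDerivAt (fun s => Tt t s) (pdr Tt t r) r := hTtr.hasDerivAt
  -- Step C : source term derivative
  have stepC : pdr (fun t s => s * Tt t s) t r = Tt t r + r * pdr Tt t r := by
    have := (hasDerivAt_id' r).mul HTt'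
    have h := this.deriv
    simpa [one_mul, Pi.mul_def, pdr] using h
  -- Step B : the radial flux term
  have Ha : HasDerivAt (fun s => f s / s) ((4 * M - r) / r ^ 3) r := by
    have hfun : (fun s => f s / s) = fun s => (1 - 2 * M * s⁻¹) / s := by
      funext s; rw [hf]; ring_nf
    rw [hfun]
    have hu : HasDerivAt (fun s => 1 - 2 * M * s⁻¹) (0 - 2 * M * (-(r ^ 2)⁻¹)) r :=
      (hasDerivAt_const r (1:ℝ)).sub ((hasDerivAt_inv hr0).const_mul (2 * M))
    have := hu.div (hasDerivAt_id r) hr0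
    refine this.congr_deriv ?_
    show ((0 - 2 * M * -(r ^ 2)⁻¹) * r - (1 - 2 * M * r⁻¹) * 1) / r ^ 2 = (4 * M - r) / r ^ 3
    field_simp
    ring
  have stepB : pdr (fun t r => f r * pdr Φ t r) t r =
      (4 * M - r) / r ^ 3 * (-(Φ t r)) + f r / r * (-(pdr Φ t r))
        - (32 * π * (2 * r) * Tt t r + 32 * π * r ^ 2 * pdr Tt t r) := by
    have hev : (fun s => f s * pdr Φ t s) =ᶠ[nhds r]
        (fun s => f s / s * (-(Φ t s)) - 32 * π * s ^ 2 * Tt t s) := by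
      have hmem : Set.Ioi (2 * M) ∈ nhds r := Ioi_mem_nhds hr
      filter_upwards [hmem] with s hs
      have hs0 : s ≠ 0 := ne_of_gt (lt_trans (by linarith) hs)
      have hfs : f s ≠ 0 := by
        rw [hf]
        have : (0:ℝ) < 1 - 2 * M / s := by
          rw [sub_pos, div_lt_one (lt_trans (by linarith) hs)]; exact hs
        exact ne_of_gt this
      rw [h2 t s hs]
      field_simp
    have hD : HasDerivAt (fun s => f s / s * (-(Φ t s)) - 32 * π * s ^ 2 * Tt t s)
        ((4 * M - r) / r ^ 3 * (-(Φ t r)) + f r / r * (-(pdr Φ t r))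
          - (32 * π * (2 * r) * Tt t r + 32 * π * r ^ 2 * pdr Tt t r)) r := by
      have h1' := Ha.mul HΦ.neg
      have h2' : HasDerivAt (fun s => 32 * π * s ^ 2 * Tt t s)
          (32 * π * (2 * r) * Tt t r + 32 * π * r ^ 2 * pdr Tt t r) r := by
        have hp : HasDerivAt (fun s : ℝ => 32 * π * s ^ 2) (32 * π * (2 * r)) r := by
          have := (hasDerivAt_pow 2 r).const_mul (32 * π)
          simpa [mul_assoc] using this
        exact hp.mul HTt'
      exact h1'.sub h2'
    show deriv (fun s => f s * pdr Φ t s) r = _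
    rw [hev.deriv_eq, hD.deriv]
  -- put everything together
  rw [stepA, stepB, stepC, h2 t r hr]
  have hfrv : f r = 1 - 2 * M / r := hf r
  rw [hfrv] at hfr ⊢
  have h2M : r - 2 * M ≠ 0 := by linarith
  field_simp [h2M]
  ring
end

section
/- Let a, M ∈ ℝ and let U = ℝ × (0, ∞) with coordinates (t, r). Let W : U → ℝ be twice continuously differentiable and X : U → ℝ be continuously differentiable. Then the equation 2r·( r² ∂_r( X(t,r)/r² ) − r² ∂_t ∂_r W(t,r) ) = 6 a M / r holds for all (t, r) ∈ U if and only if there exists a function β : ℝ → ℝ such that X(t, r) = − a M / r + β(t) r² + r² ∂_t W(t, r) for all (t, r) ∈ U. -/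
open Function Filter Topology Set

section Calculus

variable {E : Type*} [NormedAddCommGroup E] [NormedSpace ℝ E]
  {g : ℝ × ℝ → E} {g' : ℝ × ℝ →L[ℝ] E} {t r : ℝ}

theorem HasFDerivAt.hasDerivAt_comp_prodMk_fst (h : HasFDerivAt g g' (t, r)) :
    HasDerivAt (fun s => g (s, r)) (g' (1, 0)) t :=
  h.comp_hasDerivAt t ((hasDerivAt_id t).prodMk (hasDerivAt_const t r))

theorem HasFDerivAt.hasDerivAt_comp_prodMk_snd (h : HasFDerivAt g g' (t, r)) :
    HasDerivAt (fun s => g (t, s)) (g' (0, 1)) r :=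
  h.comp_hasDerivAt r ((hasDerivAt_const r t).prodMk (hasDerivAt_id r))

theorem IsOpen.forall_hasDerivAt_zero_iff {f : ℝ → E} {s : Set ℝ} (hs : IsOpen s)
    (hs' : IsPreconnected s) :
    (∀ x ∈ s, HasDerivAt f 0 x) ↔ ∃ c, ∀ x ∈ s, f x = c := by
  refine ⟨fun h => ?_, ?_⟩
  · exact hs.exists_is_const_of_deriv_eq_zero hs'
      (fun x hx => (h x hx).differentiableAt.differentiableWithinAt) (fun x hx => (h x hx).deriv)
  · rintro ⟨c, hc⟩ x hx
    exact (hasDerivAt_const x c).congr_of_eventuallyEq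
      (eventually_of_mem (hs.mem_nhds hx) hc)

end Calculus

theorem pdt_eq_fderiv_s16 {W : ℝ → ℝ → ℝ} {t r : ℝ} (h : DifferentiableAt ℝ (uncurry W) (t, r)) :
    pdt W t r = fderiv ℝ (uncurry W) (t, r) (1, 0) :=
  h.hasFDerivAt.hasDerivAt_comp_prodMk_fst.deriv

theorem pdr_eq_fderiv_s16 {W : ℝ → ℝ → ℝ} {t r : ℝ} (h : DifferentiableAt ℝ (uncurry W) (t, r)) :
    pdr W t r = fderiv ℝ (uncurry W) (t, r) (0, 1) :=
  h.hasFDerivAt.hasDerivAt_comp_prodMk_snd.deriv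

theorem hasDerivAt_pdt_of_contDiffAt {W : ℝ → ℝ → ℝ} {t r : ℝ}
    (hW : ContDiffAt ℝ 2 (uncurry W) (t, r)) :
    HasDerivAt (fun s => pdt W t s) (pdt (pdr W) t r) r := by
  have hdiff : ∀ᶠ p in 𝓝 (t, r), DifferentiableAt ℝ (uncurry W) p :=
    (hW.eventually (by simp)).mono fun p hp => hp.differentiableAt (by norm_num)
  have hf' : HasFDerivAt (fderiv ℝ (uncurry W)) (fderiv ℝ (fderiv ℝ (uncurry W)) (t, r)) (t, r) :=
    ((hW.fderiv_right (m := 1) le_rfl).differentiableAt (by norm_num)).hasFDerivAt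
  set f'' := fderiv ℝ (fderiv ℝ (uncurry W)) (t, r)
  have hf'_apply (v : ℝ × ℝ) : HasFDerivAt (fun p => fderiv ℝ (uncurry W) p v)
      ((ContinuousLinearMap.apply ℝ ℝ v).comp f'') (t, r) :=
    (ContinuousLinearMap.apply ℝ ℝ v).hasFDerivAt.comp (t, r) hf'
  have hdt : HasDerivAt (fun s => pdt W t s) (f'' (0, 1) (1, 0)) r := by
    refine (hf'_apply (1, 0)).hasDerivAt_comp_prodMk_snd.congr_of_eventuallyEq ?_
    filter_upwards [((continuous_const.prodMk continuous_id).tendsto r).eventually hdiff]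
      with s hs using pdt_eq_fderiv_s16 hs
  have hdr : pdt (pdr W) t r = f'' (1, 0) (0, 1) := by
    refine ((hf'_apply (0, 1)).hasDerivAt_comp_prodMk_fst.congr_of_eventuallyEq ?_).deriv
    filter_upwards [((continuous_id.prodMk continuous_const).tendsto t).eventually hdiff]
      with s hs using pdr_eq_fderiv_s16 hs
  rwa [hdr, hW.isSymmSndFDerivAt (by simp)]

theorem hasDerivAt_const_div_pow_three (c : ℝ) {r : ℝ} (hr : r ≠ 0) :
    HasDerivAt (fun s : ℝ => c / s ^ 3) (-(3 * c) / r ^ 4) r :=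
  ((hasDerivAt_const r c).div (hasDerivAt_pow 3 r) (pow_ne_zero 3 hr)).congr_deriv
    (by field_simp; ring)

/-- The general `l = 1` odd-parity vacuum relation: for C² `W` and C¹ `X` on
`ℝ × (0, ∞)`, the equation `2r(r² ∂_r(X/r²) − r² ∂_t ∂_r W) = 6aM/r` holds everywhere
iff there is a function `β(t)` with `X = −aM/r + β(t) r² + r² ∂_t W`. -/
theorem stmt_16 (a M : ℝ) (W X : ℝ → ℝ → ℝ)
    (hW : ContDiffOn ℝ 2 (fun p : ℝ × ℝ => W p.1 p.2) {p : ℝ × ℝ | 0 < p.2})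
    (hX : ContDiffOn ℝ 1 (fun p : ℝ × ℝ => X p.1 p.2) {p : ℝ × ℝ | 0 < p.2}) :
    (∀ t r : ℝ, 0 < r →
        2 * r * (r ^ 2 * deriv (fun s => X t s / s ^ 2) r
            - r ^ 2 * pdt (pdr W) t r)
          = 6 * a * M / r) ↔
    (∃ β : ℝ → ℝ, ∀ t r : ℝ, 0 < r →
        X t r = -(a * M) / r + β t * r ^ 2 + r ^ 2 * pdt W t r) := by
  have hU : IsOpen {p : ℝ × ℝ | 0 < p.2} := isOpen_lt continuous_const continuous_snd
  set Q : ℝ → ℝ → ℝ := fun t s => X t s / s ^ 2 - pdt W t s + a * M / s ^ 3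
  have hQ (t : ℝ) {r : ℝ} (hr : 0 < r) : HasDerivAt (Q t)
      (deriv (fun s => X t s / s ^ 2) r - pdt (pdr W) t r - 3 * (a * M) / r ^ 4) r := by
    have hXr : DifferentiableAt ℝ (X t) r :=
      ((hX.contDiffAt (hU.mem_nhds hr)).differentiableAt one_ne_zero).hasFDerivAt
        |>.hasDerivAt_comp_prodMk_snd.differentiableAt
    have hXdiv : DifferentiableAt ℝ (fun s => X t s / s ^ 2) r :=
      hXr.div (differentiableAt_pow 2) (pow_ne_zero 2 hr.ne')
    have hWt : HasDerivAt (fun s => pdt W t s) (pdt (pdr W) t r) r :=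
      hasDerivAt_pdt_of_contDiffAt (hW.contDiffAt (hU.mem_nhds hr))
    exact ((hXdiv.hasDerivAt.sub hWt).add
      (hasDerivAt_const_div_pow_three (a * M) hr.ne')).congr_deriv (by ring)
  calc _ ↔ ∀ t, ∀ r ∈ Ioi (0 : ℝ), HasDerivAt (Q t) 0 r := by
        refine forall_congr' fun t => forall_congr' fun r => imp_congr_right fun hr => ?_
        have key : 2 * r * (r ^ 2 * deriv (fun s => X t s / s ^ 2) r - r ^ 2 * pdt (pdr W) t r)
              - 6 * a * M / r
            = 2 * r ^ 3 * (deriv (fun s => X t s / s ^ 2) r - pdt (pdr W) t r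
              - 3 * (a * M) / r ^ 4) := by
          field_simp; ring
        rw [← sub_eq_zero, key, mul_eq_zero, or_iff_right (by positivity)]
        exact ⟨fun h => h ▸ hQ t hr, fun h => (hQ t hr).unique h⟩
    _ ↔ ∀ t, ∃ c, ∀ r ∈ Ioi (0 : ℝ), Q t r = c :=
        forall_congr' fun t => isOpen_Ioi.forall_hasDerivAt_zero_iff isPreconnected_Ioi
    _ ↔ ∃ β : ℝ → ℝ, ∀ t, ∀ r ∈ Ioi (0 : ℝ), Q t r = β t := Classical.skolem
    _ ↔ _ := by
        refine exists_congr fun β => forall_congr' fun t => forall_congr' fun r =>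
          imp_congr_right fun hr => ?_
        have hr₀ : r ≠ 0 := ne_of_gt hr
        have key : X t r - (-(a * M) / r + β t * r ^ 2 + r ^ 2 * pdt W t r)
            = r ^ 2 * (Q t r - β t) := by
          simp only [Q]; field_simp; ring
        rw [← sub_eq_zero (a := X t r), key, mul_eq_zero, or_iff_right (by positivity),
          sub_eq_zero]
end
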